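/- arXiv:1702.04252 — 8 statements merged into one kernel-verified Lean document; each statement's English description precedes it below -/
import Mathlib

section
/- Let G be a finite connected graph, let {F_1, …, F_k} be a partition of E(G) that is coarser than the Θ*-partition (i.e. each F_j is a union of Θ*-classes of G). Then for any two vertices x, y ∈ V(G) it holds that d_G(x,y) = Σ_{j=1}^{k} d_{G/F_j}(ℓ_j(x), ℓ_j(y)). -/
open SimpleGraph

variable {V : Type*}

/-- The Djoković–Winkler relation Θ on edges of `G`:
`e₁ = u₁v₁` and `e₂ = u₂v₂` are in relation Θ if
`d(u₁,u₂) + d(v₁,v₂) ≠ d(u₁,v₂) + d(v₁,u₂)`. -/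
def djokovicWinkler (G : SimpleGraph V) (e₁ e₂ : Sym2 V) : Prop :=
  e₁ ∈ G.edgeSet ∧ e₂ ∈ G.edgeSet ∧
    ∃ u₁ v₁ u₂ v₂, e₁ = s(u₁, v₁) ∧ e₂ = s(u₂, v₂) ∧
      G.dist u₁ u₂ + G.dist v₁ v₂ ≠ G.dist u₁ v₂ + G.dist v₁ u₂

/-- Θ*, the transitive closure of the relation Θ. -/
def thetaStar (G : SimpleGraph V) : Sym2 V → Sym2 V → Prop :=
  Relation.TransGen (djokovicWinkler G)

/-- The quotient graph `G / F`: its vertices are the connected components of `G - F`,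
two components being adjacent if some vertex of one is adjacent in `G` to some
vertex of the other. -/
def quotientGraph (G : SimpleGraph V) (F : Set (Sym2 V)) :
    SimpleGraph (G.deleteEdges F).ConnectedComponent where
  Adj C D := C ≠ D ∧ ∃ x y : V, G.Adj x y ∧
    (G.deleteEdges F).connectedComponentMk x = C ∧
    (G.deleteEdges F).connectedComponentMk y = D
  symm := by
    constructor
    rintro C D ⟨hne, x, y, hadj, hx, hy⟩
    exact ⟨hne.symm, y, x, hadj.symm, hy, hx⟩
  loopless := by constructor; rintro C ⟨hne, -⟩; exact hne rfl

/-!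
For a Θ-closed edge set `F`, the defect `θ(e, f) = d(e₀, f₀) + d(e₁, f₁) - d(e₀, f₁) - d(e₁, f₀)`
of two darts vanishes when exactly one of them has its edge in `F`, so summing `θ(e, ·)` over the
`F`-darts of a walk from `a` to `b` telescopes to a quantity depending only on `a` and `b`.
Double counting `∑ θ(e, f)` over the `F`-darts `e` of a geodesic and the `F`-darts `f` of any
walk with the same ends (each row sums to `-2`, each column to at least `-2`) shows that a
geodesic crosses `F` no more often than any other walk. The least number of `F`-crossings of a
walk from `x` to `y` is the distance of their components in `G / F` (project walks down, lift
quotient walks up), and the crossing numbers of one walk over the parts of the partition add up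
to its length; applied to a geodesic this gives the formula.
-/

namespace SimpleGraph

variable {G : SimpleGraph V}

section Crossings

open scoped Classical

noncomputable def Walk.dartsIn {u v : V} (W : G.Walk u v) (F : Set (Sym2 V)) : List G.Dart :=
  W.darts.filter (·.edge ∈ F)

variable {F : Set (Sym2 V)}

@[simp]
lemma Walk.mem_dartsIn {u v : V} {W : G.Walk u v} {d : G.Dart} :
    d ∈ W.dartsIn F ↔ d ∈ W.darts ∧ d.edge ∈ F := by
  simp [Walk.dartsIn]

lemma Walk.length_dartsIn_cons {u v w : V} (h : G.Adj u v) (W : G.Walk v w) :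
    ((Walk.cons h W).dartsIn F).length =
      (W.dartsIn F).length + if s(u, v) ∈ F then 1 else 0 := by
  by_cases huv : s(u, v) ∈ F <;> simp [Walk.dartsIn, huv, Dart.edge]

lemma Walk.length_dartsIn_append {u v w : V} (W₁ : G.Walk u v) (W₂ : G.Walk v w) :
    ((W₁.append W₂).dartsIn F).length = (W₁.dartsIn F).length + (W₂.dartsIn F).length := by
  simp [Walk.dartsIn, Walk.darts_append]

lemma Walk.dartsIn_eq_nil_of_edges_disjoint {u v : V} (W : G.Walk u v)
    (hW : ∀ e ∈ W.edges, e ∉ F) : W.dartsIn F = [] := by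
  simpa [Walk.dartsIn, Walk.edges] using hW

lemma Walk.sum_length_dartsIn {ι : Type*} [Fintype ι] {F : ι → Set (Sym2 V)}
    (hdisj : Pairwise fun i j => Disjoint (F i) (F j)) (hcover : G.edgeSet ⊆ ⋃ j, F j) :
    ∀ {u v : V} (W : G.Walk u v), ∑ j, (W.dartsIn (F j)).length = W.length
  | _, _, .nil => by simp [Walk.dartsIn]
  | u, _, .cons (v := v) h W => by
    obtain ⟨j₀, hj₀⟩ := Set.mem_iUnion.mp (hcover (G.mem_edgeSet.mpr h))
    have hone : ∑ j, (if s(u, v) ∈ F j then 1 else 0) = 1 := by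
      rw [Finset.sum_eq_single j₀ (fun j _ hj => if_neg fun hj' =>
        Set.disjoint_left.mp (hdisj hj) hj' hj₀) (by simp), if_pos hj₀]
    simp only [Walk.length_dartsIn_cons, Finset.sum_add_distrib, hone,
      Walk.sum_length_dartsIn hdisj hcover W, Walk.length_cons]

end Crossings

lemma Walk.sum_darts_sub {M : Type*} [AddCommGroup M] (φ : V → M) :
    ∀ {u v : V} (W : G.Walk u v), (W.darts.map fun d => φ d.fst - φ d.snd).sum = φ u - φ v
  | _, _, .nil => by simp
  | _, _, .cons _ W => by
    rw [Walk.darts_cons, List.map_cons, List.sum_cons, Walk.sum_darts_sub φ W]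
    abel

/-- `e` and `f` are in relation Θ exactly when this is nonzero. -/
noncomputable def thetaDefect (G : SimpleGraph V) (e f : G.Dart) : ℤ :=
  G.dist e.fst f.fst + G.dist e.snd f.snd - G.dist e.fst f.snd - G.dist e.snd f.fst

lemma thetaDefect_comm (e f : G.Dart) : thetaDefect G e f = thetaDefect G f e := by
  simp only [thetaDefect, dist_comm (u := e.fst), dist_comm (u := e.snd)]
  ring

lemma djokovicWinkler_of_thetaDefect_ne_zero {e f : G.Dart} (h : thetaDefect G e f ≠ 0) :
    djokovicWinkler G e.edge f.edge :=
  ⟨e.edge_mem, f.edge_mem, e.fst, e.snd, f.fst, f.snd, rfl, rfl, by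
    rw [thetaDefect] at h; omega⟩

variable {F : Set (Sym2 V)}

lemma sum_dartsIn_thetaDefect (hF : ∀ e ∈ F, ∀ e', djokovicWinkler G e e' → e' ∈ F)
    {e : G.Dart} (he : e.edge ∈ F) {a b : V} (W : G.Walk a b) :
    ((W.dartsIn F).map (thetaDefect G e)).sum =
      (G.dist e.fst a - G.dist e.snd a : ℤ) - (G.dist e.fst b - G.dist e.snd b) := by
  classical
  have hout : ((W.darts.filter fun f => f.edge ∉ F).map (thetaDefect G e)).sum = 0 := by
    refine List.sum_eq_zero fun z hz => ?_
    obtain ⟨f, hf, rfl⟩ := List.mem_map.mp hz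
    by_contra hne
    exact (by simpa using List.of_mem_filter hf : f.edge ∉ F)
      (hF _ he _ (djokovicWinkler_of_thetaDefect_ne_zero hne))
  rw [Walk.dartsIn, ← add_zero (List.sum _), ← hout,
    List.sum_map_filter_add_sum_map_filter_not,
    ← Walk.sum_darts_sub (fun z => (G.dist e.fst z - G.dist e.snd z : ℤ)) W]
  congr 1
  refine List.map_congr_left fun f _ => ?_
  simp only [thetaDefect]
  ring

lemma Walk.dist_snd_eq_and_dist_fst_eq_of_length_eq_dist {x y : V} {P : G.Walk x y}
    (hP : P.length = G.dist x y) {d : G.Dart} (hd : d ∈ P.darts) :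
    G.dist x d.snd = G.dist x d.fst + 1 ∧ G.dist d.fst y = G.dist d.snd y + 1 := by
  obtain ⟨P₁, P₂, rfl⟩ := (Walk.isSubwalk_toWalk_adj_iff_mem_darts P).mpr hd
  simp only [Walk.length_append, Adj.toWalk, Walk.length_cons, Walk.length_nil] at hP
  have h₁ := dist_le P₁
  have h₂ := dist_le P₂
  have h₁' := dist_le (P₁.concat d.adj)
  have h₂' := dist_le (Walk.cons d.adj P₂)
  have t₁ := Reachable.dist_triangle_right ⟨P₂⟩ x
  have t₂ := Reachable.dist_triangle_left ⟨P₁⟩ y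
  have hx := d.adj.diff_dist_adj (u := x)
  simp only [Walk.length_concat, Walk.length_cons] at h₁' h₂'
  omega

lemma Walk.length_dartsIn_le_of_length_eq_dist
    (hF : ∀ e ∈ F, ∀ e', djokovicWinkler G e e' → e' ∈ F)
    {x y : V} (P W : G.Walk x y) (hP : P.length = G.dist x y) :
    (P.dartsIn F).length ≤ (W.dartsIn F).length := by
  have hrow : ∀ e ∈ P.dartsIn F, ((W.dartsIn F).map (thetaDefect G e)).sum ≤ -2 := by
    intro e he
    rw [Walk.mem_dartsIn] at he
    obtain ⟨hx, hy⟩ := P.dist_snd_eq_and_dist_fst_eq_of_length_eq_dist hP he.1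
    rw [sum_dartsIn_thetaDefect hF he.2, dist_comm (u := e.fst) (v := x),
      dist_comm (u := e.snd) (v := x)]
    omega
  have hcol : ∀ f ∈ W.dartsIn F, -2 ≤ ((P.dartsIn F).map (thetaDefect G · f)).sum := by
    intro f hf
    rw [Walk.mem_dartsIn] at hf
    simp only [thetaDefect_comm _ f]
    rw [sum_dartsIn_thetaDefect hF hf.2]
    have := f.adj.diff_dist_adj (u := x)
    have := f.adj.diff_dist_adj (u := y)
    rw [dist_comm (u := f.fst) (v := x), dist_comm (u := f.snd) (v := x),
      dist_comm (u := f.fst) (v := y), dist_comm (u := f.snd) (v := y)]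
    omega
  have hswap := Multiset.sum_map_sum_map (↑(P.dartsIn F) : Multiset G.Dart) ↑(W.dartsIn F)
    (f := thetaDefect G)
  simp only [Multiset.map_coe, Multiset.sum_coe] at hswap
  have hupper := List.sum_le_card_nsmul _ _ (List.forall_mem_map.mpr hrow)
  have hlower := List.card_nsmul_le_sum _ _ (List.forall_mem_map.mpr hcol)
  simp only [List.length_map, nsmul_eq_mul] at hupper hlower
  exact_mod_cast (by linarith : ((P.dartsIn F).length : ℤ) ≤ (W.dartsIn F).length)

section Quotient

variable (G) (F : Set (Sym2 V))

lemma connectedComponentMk_deleteEdges_eq_or_quotientGraph_adj {a b : V} (h : G.Adj a b) :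
    (G.deleteEdges F).connectedComponentMk a = (G.deleteEdges F).connectedComponentMk b ∨
      (quotientGraph G F).Adj ((G.deleteEdges F).connectedComponentMk a)
        ((G.deleteEdges F).connectedComponentMk b) :=
  or_iff_not_imp_left.mpr fun hne => ⟨hne, a, b, h, rfl, rfl⟩

lemma quotientGraph_reachable_of_reachable {x y : V} (h : G.Reachable x y) :
    (quotientGraph G F).Reachable ((G.deleteEdges F).connectedComponentMk x)
      ((G.deleteEdges F).connectedComponentMk y) := by
  rw [reachable_iff_reflTransGen] at h ⊢
  refine h.lift' _ fun a b hab => ?_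
  rcases connectedComponentMk_deleteEdges_eq_or_quotientGraph_adj G F hab with heq | hadj
  · change Relation.ReflTransGen _ _ _
    rw [heq]
  · exact .single hadj

lemma quotientGraph_dist_le_length_dartsIn :
    ∀ {x y : V} (W : G.Walk x y),
      (quotientGraph G F).dist ((G.deleteEdges F).connectedComponentMk x)
        ((G.deleteEdges F).connectedComponentMk y) ≤ (W.dartsIn F).length
  | _, _, .nil => by simp
  | a, c, .cons (v := b) h W => by
    have ih := quotientGraph_dist_le_length_dartsIn W
    rw [Walk.length_dartsIn_cons]
    by_cases hab : s(a, b) ∈ F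
    · rcases connectedComponentMk_deleteEdges_eq_or_quotientGraph_adj G F h with heq | hadj
      · rw [heq, if_pos hab]
        omega
      · have := hadj.reachable.dist_triangle_left ((G.deleteEdges F).connectedComponentMk c)
        rw [dist_eq_one_iff_adj.mpr hadj] at this
        rw [if_pos hab]
        omega
    · rw [ConnectedComponent.connectedComponentMk_eq_of_adj (deleteEdges_adj.mpr ⟨h, hab⟩),
        if_neg hab]
      simpa using ih

lemma exists_walk_dartsIn_eq_nil_of_reachable_deleteEdges {x y : V}
    (h : (G.deleteEdges F).Reachable x y) : ∃ W : G.Walk x y, W.dartsIn F = [] := by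
  obtain ⟨W⟩ := h
  refine ⟨W.mapLe (G.deleteEdges_le F), Walk.dartsIn_eq_nil_of_edges_disjoint _ fun e he => ?_⟩
  rw [Walk.edges_mapLe_eq_edges] at he
  have := W.edges_subset_edgeSet he
  rw [edgeSet_deleteEdges] at this
  exact this.2

lemma exists_walk_length_dartsIn_le_length :
    ∀ {C D : (G.deleteEdges F).ConnectedComponent} (q : (quotientGraph G F).Walk C D)
      {x y : V}, (G.deleteEdges F).connectedComponentMk x = C →
      (G.deleteEdges F).connectedComponentMk y = D →
      ∃ W : G.Walk x y, (W.dartsIn F).length ≤ q.length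
  | _, _, .nil, x, y, rfl, hy => by
    obtain ⟨W, hW⟩ := exists_walk_dartsIn_eq_nil_of_reachable_deleteEdges G F
      (ConnectedComponent.exact hy.symm)
    exact ⟨W, by simp [hW]⟩
  | _, _, .cons hadj q, x, y, hx, hy => by
    rw [Walk.length_cons]
    obtain ⟨-, a, b, hab, ha, hb⟩ := hadj
    obtain ⟨W₁, hW₁⟩ := exists_walk_dartsIn_eq_nil_of_reachable_deleteEdges G F
      (ConnectedComponent.exact (hx.trans ha.symm))
    obtain ⟨W₂, hW₂⟩ := exists_walk_length_dartsIn_le_length q hb hy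
    refine ⟨W₁.append (.cons hab W₂), ?_⟩
    rw [Walk.length_dartsIn_append, Walk.length_dartsIn_cons, hW₁, List.length_nil]
    split_ifs <;> omega

lemma exists_walk_length_dartsIn_le_quotientGraph_dist {x y : V} (h : G.Reachable x y) :
    ∃ W : G.Walk x y, (W.dartsIn F).length ≤
      (quotientGraph G F).dist ((G.deleteEdges F).connectedComponentMk x)
        ((G.deleteEdges F).connectedComponentMk y) := by
  obtain ⟨q, hq⟩ := (quotientGraph_reachable_of_reachable G F h).exists_walk_length_eq_dist
  rw [← hq]
  exact exists_walk_length_dartsIn_le_length G F q rfl rfl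

end Quotient

end SimpleGraph

theorem dist_eq_sum_quotient_dist_general (G : SimpleGraph V) (hG : G.Connected)
    (k : ℕ) (F : Fin k → Set (Sym2 V))
    (hdisj : ∀ j j', j ≠ j' → Disjoint (F j) (F j'))
    (hcover : ⋃ j, F j = G.edgeSet)
    (hcoarse : ∀ j, ∀ e ∈ F j, ∀ e', thetaStar G e e' → e' ∈ F j)
    (x y : V) :
    G.dist x y = ∑ j : Fin k, (quotientGraph G (F j)).dist
      ((G.deleteEdges (F j)).connectedComponentMk x)
      ((G.deleteEdges (F j)).connectedComponentMk y) := by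
  have hΘ (j) : ∀ e ∈ F j, ∀ e', djokovicWinkler G e e' → e' ∈ F j :=
    fun e he e' h => hcoarse j e he e' (.single h)
  obtain ⟨P, hP⟩ := hG.exists_walk_length_eq_dist x y
  have hcount : ∑ j, (P.dartsIn (F j)).length = G.dist x y := by
    rw [P.sum_length_dartsIn hdisj hcover.ge, hP]
  refine le_antisymm ?_ ?_
  · rw [← hcount]
    refine Finset.sum_le_sum fun j _ => ?_
    obtain ⟨W, hW⟩ :=
      exists_walk_length_dartsIn_le_quotientGraph_dist G (F j) (hG.preconnected x y)
    exact (P.length_dartsIn_le_of_length_eq_dist (hΘ j) W hP).trans hW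
  · rw [← hcount]
    exact Finset.sum_le_sum fun j _ => quotientGraph_dist_le_length_dartsIn G (F j) P

/-- If `G` is a finite connected graph and `{F 0, …, F (k-1)}` is a
partition of `E(G)` coarser than the Θ*-partition (each part is nonempty, the parts are
pairwise disjoint, they cover `E(G)`, and each part is closed under Θ*, i.e. is a union
of Θ*-classes), then for all vertices `x y`,
`d_G(x,y) = ∑_j d_{G/F_j}(ℓ_j x, ℓ_j y)`, where `ℓ_j x` is the connected component
of `G - F j` containing `x`. -/
theorem dist_eq_sum_quotient_dist [Fintype V] (G : SimpleGraph V) (hG : G.Connected)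
    (k : ℕ) (F : Fin k → Set (Sym2 V))
    (hne : ∀ j, (F j).Nonempty)
    (hdisj : ∀ j j', j ≠ j' → Disjoint (F j) (F j'))
    (hcover : ⋃ j, F j = G.edgeSet)
    (hcoarse : ∀ j, ∀ e ∈ F j, ∀ e', thetaStar G e e' → e' ∈ F j)
    (x y : V) :
    G.dist x y = ∑ j : Fin k, (quotientGraph G (F j)).dist
      ((G.deleteEdges (F j)).connectedComponentMk x)
      ((G.deleteEdges (F j)).connectedComponentMk y) :=
  dist_eq_sum_quotient_dist_general G hG k F hdisj hcover hcoarse x y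
end

section
/- Let G be a finite connected graph and let E be a Θ*-class of G. If x, y ∈ V(G), P is a shortest x,y-path in G and Q is an arbitrary x,y-path in G, then |E(Q) ∩ E| ≥ |E(P) ∩ E|. -/
open SimpleGraph

variable {V : Type*}

/-- `E` is a Θ*-class of `G`: the equivalence class under Θ* of some edge of `G`. -/
def IsThetaStarClass (G : SimpleGraph V) (E : Set (Sym2 V)) : Prop :=
  ∃ e₀ ∈ G.edgeSet, E = {e | e = e₀ ∨ thetaStar G e₀ e}

/-!
For darts `e = (a, b)` and `g = (c, d)` put `δ(e, g) = d(a, d) - d(b, d) - (d(a, c) - d(b, c))`.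
It is symmetric, and `δ(e, g) ≠ 0` means `e Θ g`. Along an `x,y`-walk, `δ(e, ·)`
telescopes to `d(a, y) - d(b, y) - (d(a, x) - d(b, x))`, which is at most `2` for every dart `e`
and equals `2` when `e` lies on a shortest `x,y`-path `P`. As a Θ*-class `E` is closed under Θ,
`[e ∈ E] δ(e, g) = [g ∈ E] δ(e, g)`, so double counting `∑_{e ∈ P} ∑_{g ∈ Q} [e ∈ E] δ(e, g)`
gives `2 |E(P) ∩ E| ≤ 2 |E(Q) ∩ E|`.
-/

theorem List.ncard_setOf_mem_inter_le {α : Type*} (l : List α) (s : Set α)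
    [DecidablePred (· ∈ s)] : ({a | a ∈ l} ∩ s).ncard ≤ l.countP (· ∈ s) := by
  classical
  have hset : {a | a ∈ l} ∩ s = ↑(l.filter (· ∈ s)).toFinset := by ext; simp
  rw [hset, Set.ncard_coe_finset, List.countP_eq_length_filter]
  exact List.toFinset_card_le _

theorem List.Nodup.ncard_setOf_mem_inter {α : Type*} {l : List α} (hl : l.Nodup) (s : Set α)
    [DecidablePred (· ∈ s)] : ({a | a ∈ l} ∩ s).ncard = l.countP (· ∈ s) := by
  classical
  have hset : {a | a ∈ l} ∩ s = ↑(l.filter (· ∈ s)).toFinset := by ext; simp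
  rw [hset, Set.ncard_coe_finset, List.countP_eq_length_filter]
  exact List.toFinset_card_of_nodup (hl.filter _)

theorem List.sum_map_sum_map_comm {α β M : Type*} [AddCommMonoid M] (l : List α) (m : List β)
    (f : α → β → M) :
    (l.map fun a => (m.map (f a)).sum).sum = (m.map fun b => (l.map (f · b)).sum).sum := by
  simpa using Multiset.sum_map_sum_map (l : Multiset α) (m : Multiset β) (f := f)

namespace SimpleGraph

variable {G : SimpleGraph V} {E : Set (Sym2 V)} {u v w x y : V}

theorem Adj.dist_le_dist_add_one (h : G.Adj v w) (u : V) : G.dist u w ≤ G.dist u v + 1 := by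
  have := h.diff_dist_adj (u := u)
  omega

namespace Walk

theorem sum_darts_map_sub {M : Type*} [AddCommGroup M] (f : V → M) (p : G.Walk u v) :
    (p.darts.map fun d => f d.snd - f d.fst).sum = f v - f u := by
  induction p with
  | nil => simp
  | cons _ _ ih =>
    simp only [darts_cons, List.map_cons, List.sum_cons, ih]
    abel

theorem dist_snd_eq_dist_fst_add_one {p : G.Walk u v} (hp : p.length = G.dist u v)
    {d : G.Dart} (hd : d ∈ p.darts) : G.dist u d.snd = G.dist u d.fst + 1 := by
  obtain ⟨ru, rv, hsplit⟩ := (isSubwalk_toWalk_adj_iff_mem_darts p).2 hd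
  have hprefix := length_eq_dist_of_subwalk hp (isSubwalk_of_append_left hsplit)
  have hru := length_eq_dist_of_subwalk hprefix (isSubwalk_of_append_left rfl)
  simp only [length_append, Adj.length_toWalk] at hprefix
  omega

theorem dist_fst_eq_dist_snd_add_one {p : G.Walk u v} (hp : p.length = G.dist u v)
    {d : G.Dart} (hd : d ∈ p.darts) : G.dist d.fst v = G.dist d.snd v + 1 := by
  have hrev := dist_snd_eq_dist_fst_add_one (p := p.reverse) (by rw [length_reverse, hp, dist_comm])
    ((mem_darts_reverse (d := d.symm)).2 (by rwa [Dart.symm_symm]))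
  rw [dist_comm, dist_comm (u := d.snd)]
  simpa using hrev

end Walk

/-- `dartCrossing e g` is the quantity `δ(e, g)` of the proof sketch above. -/
noncomputable def dartCrossing (e g : G.Dart) : ℤ :=
  G.dist e.fst g.snd - G.dist e.snd g.snd - (G.dist e.fst g.fst - G.dist e.snd g.fst)

theorem dartCrossing_comm (e g : G.Dart) : dartCrossing e g = dartCrossing g e := by
  simp only [dartCrossing, dist_comm (u := g.fst), dist_comm (u := g.snd)]
  ring

theorem djokovicWinkler_of_dartCrossing_ne_zero {e g : G.Dart} (h : dartCrossing e g ≠ 0) :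
    djokovicWinkler G e.edge g.edge :=
  ⟨e.edge_mem, g.edge_mem, e.fst, e.snd, g.fst, g.snd, rfl, rfl,
    fun hsum => h (by simp only [dartCrossing]; omega)⟩

theorem IsThetaStarClass.mem_of_djokovicWinkler (hE : IsThetaStarClass G E) {e f : Sym2 V}
    (he : e ∈ E) (h : djokovicWinkler G e f) : f ∈ E := by
  obtain ⟨e₀, -, rfl⟩ := hE
  rcases he with rfl | he
  · exact Or.inr (.single h)
  · exact Or.inr (he.tail h)

theorem IsThetaStarClass.mem_iff_of_dartCrossing_ne_zero (hE : IsThetaStarClass G E)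
    {e g : G.Dart} (h : dartCrossing e g ≠ 0) : e.edge ∈ E ↔ g.edge ∈ E :=
  ⟨fun he => hE.mem_of_djokovicWinkler he (djokovicWinkler_of_dartCrossing_ne_zero h),
    fun hg => hE.mem_of_djokovicWinkler hg
      (djokovicWinkler_of_dartCrossing_ne_zero (dartCrossing_comm e g ▸ h))⟩

theorem IsThetaStarClass.ite_dartCrossing (hE : IsThetaStarClass G E) [DecidablePred (· ∈ E)]
    (e g : G.Dart) :
    (if e.edge ∈ E then dartCrossing e g else 0) = if g.edge ∈ E then dartCrossing e g else 0 := by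
  by_cases h : dartCrossing e g = 0
  · simp [h]
  · simp only [hE.mem_iff_of_dartCrossing_ne_zero h]

namespace Walk

theorem sum_dartCrossing (e : G.Dart) (p : G.Walk u v) :
    (p.darts.map (dartCrossing e)).sum =
      G.dist e.fst v - G.dist e.snd v - (G.dist e.fst u - G.dist e.snd u) :=
  sum_darts_map_sub (fun w => (G.dist e.fst w : ℤ) - G.dist e.snd w) p

theorem sum_dartCrossing_le_two (e : G.Dart) (p : G.Walk u v) :
    (p.darts.map (dartCrossing e)).sum ≤ 2 := by
  have hv := e.adj.symm.dist_le_dist_add_one v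
  have hu := e.adj.dist_le_dist_add_one u
  rw [sum_dartCrossing, dist_comm (u := e.fst), dist_comm (u := e.snd),
    dist_comm (u := e.fst) (v := u), dist_comm (u := e.snd) (v := u)]
  omega

theorem sum_dartCrossing_eq_two {p : G.Walk u v} (hp : p.length = G.dist u v) {e : G.Dart}
    (he : e ∈ p.darts) (q : G.Walk u v) : (q.darts.map (dartCrossing e)).sum = 2 := by
  have hu := dist_snd_eq_dist_fst_add_one hp he
  have hv := dist_fst_eq_dist_snd_add_one hp he
  rw [sum_dartCrossing, dist_comm (u := e.fst) (v := u), dist_comm (u := e.snd) (v := u)]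
  omega

end Walk

theorem IsThetaStarClass.countP_edges_le (hE : IsThetaStarClass G E) [DecidablePred (· ∈ E)]
    {P : G.Walk x y} (hP : P.length = G.dist x y) (Q : G.Walk x y) :
    P.edges.countP (· ∈ E) ≤ Q.edges.countP (· ∈ E) := by
  simp only [Walk.edges, List.countP_map, Function.comp_def]
  have hrow : ∀ e ∈ P.darts, (Q.darts.map fun g => if e.edge ∈ E then dartCrossing e g else 0).sum
      = if e.edge ∈ E then 2 else 0 := by
    intro e he
    split_ifs
    · exact Walk.sum_dartCrossing_eq_two hP he Q
    · simp
  have hcol : ∀ g ∈ Q.darts,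
      (P.darts.map fun e => if g.edge ∈ E then dartCrossing e g else 0).sum
        ≤ if g.edge ∈ E then 2 else 0 := by
    intro g _
    split_ifs
    · simpa only [dartCrossing_comm _ g] using Walk.sum_dartCrossing_le_two g P
    · simp
  have hcount : ∀ l : List G.Dart,
      (l.map fun d => if d.edge ∈ E then (2 : ℤ) else 0).sum = 2 * l.countP (·.edge ∈ E) := by
    intro l
    simp [List.sum_map_ite, List.countP_eq_length_filter, mul_comm]
  have key : 2 * (P.darts.countP (·.edge ∈ E) : ℤ) ≤ 2 * Q.darts.countP (·.edge ∈ E) :=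
    calc 2 * (P.darts.countP (·.edge ∈ E) : ℤ)
        = (P.darts.map fun e =>
            (Q.darts.map fun g => if e.edge ∈ E then dartCrossing e g else 0).sum).sum := by
          rw [← hcount, List.map_congr_left hrow]
      _ = (Q.darts.map fun g =>
            (P.darts.map fun e => if g.edge ∈ E then dartCrossing e g else 0).sum).sum := by
          rw [List.sum_map_sum_map_comm]
          simp only [hE.ite_dartCrossing]
      _ ≤ (Q.darts.map fun g => if g.edge ∈ E then 2 else 0).sum := List.sum_le_sum hcol
      _ = 2 * Q.darts.countP (·.edge ∈ E) := hcount _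
  omega

end SimpleGraph

theorem card_edges_inter_thetaStarClass_ge_general (G : SimpleGraph V)
    (E : Set (Sym2 V)) (hE : IsThetaStarClass G E)
    (x y : V) (P Q : G.Walk x y) (hPmin : P.length = G.dist x y)
    (hQ : Q.IsPath) :
    ({e | e ∈ Q.edges} ∩ E).ncard ≥ ({e | e ∈ P.edges} ∩ E).ncard := by
  classical
  calc ({e | e ∈ P.edges} ∩ E).ncard
      ≤ P.edges.countP (· ∈ E) := P.edges.ncard_setOf_mem_inter_le E
    _ ≤ Q.edges.countP (· ∈ E) := hE.countP_edges_le hPmin Q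
    _ = ({e | e ∈ Q.edges} ∩ E).ncard := (hQ.isTrail.edges_nodup.ncard_setOf_mem_inter E).symm

/-- Let `G` be a finite connected graph and `E` a Θ*-class of `G`.
If `P` is a shortest `x,y`-path and `Q` an arbitrary `x,y`-path, then
`|E(Q) ∩ E| ≥ |E(P) ∩ E|`. -/
theorem card_edges_inter_thetaStarClass_ge [Fintype V] (G : SimpleGraph V)
    (hG : G.Connected) (E : Set (Sym2 V)) (hE : IsThetaStarClass G E)
    (x y : V) (P Q : G.Walk x y) (hP : P.IsPath) (hPmin : P.length = G.dist x y)
    (hQ : Q.IsPath) :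
    ({e | e ∈ Q.edges} ∩ E).ncard ≥ ({e | e ∈ P.edges} ∩ E).ncard :=
  card_edges_inter_thetaStarClass_ge_general G E hE x y P Q hPmin hQ
end

section
/- Let φ be an automorphism of ZT(n,h). Then the subgraph of ZT(n,h) induced on the vertex set φ(V(C_1)) is either C_1 or C_2; that is, φ(V^0_0 ∪ V^1_0) = V^0_0 ∪ V^1_0 or φ(V^0_0 ∪ V^1_0) = V^0_n ∪ V^1_n. -/
open SimpleGraph

/-- Vertices of the zig-zag tubulene `ZT(n,h)`: a vertex `v^k_{i,j}` is the triple
`(k, i, j)` with `k ∈ {0,1}` the type, `0 ≤ i ≤ n` the layer, and `j ∈ ℤ_h`. -/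
abbrev ZTVert (n h : ℕ) := Fin 2 × Fin (n + 1) × ZMod h

/-- The zig-zag tubulene `ZT(n,h)`: edges are `v^0_{i,j} ~ v^1_{i,j}`,
`v^1_{i,j} ~ v^0_{i,j+1}` (second index modulo `h`) and `v^1_{i,j} ~ v^0_{i+1,j}`. -/
def ZT (n h : ℕ) : SimpleGraph (ZTVert n h) :=
  SimpleGraph.fromRel (fun a b =>
    (a.1 = 0 ∧ b.1 = 1 ∧ a.2.1 = b.2.1 ∧ a.2.2 = b.2.2) ∨
    (a.1 = 1 ∧ b.1 = 0 ∧ a.2.1 = b.2.1 ∧ b.2.2 = a.2.2 + 1) ∨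
    (a.1 = 1 ∧ b.1 = 0 ∧ (b.2.1 : ℕ) = (a.2.1 : ℕ) + 1 ∧ a.2.2 = b.2.2))

/-- The set `V^k_i` of vertices of type `k` in layer `i` of `ZT(n,h)`. -/
def ZTVset (n h : ℕ) (k : Fin 2) (i : ℕ) : Set (ZTVert n h) :=
  {v | v.1 = k ∧ (v.2.1 : ℕ) = i}

lemma adj_zero {n h : ℕ} (i : Fin (n+1)) (j : ZMod h) (c : ZTVert n h) :
    (ZT n h).Adj (0, i, j) c ↔
      c = (1, i, j) ∨ c = (1, i, j - 1) ∨ ∃ i' : Fin (n+1), (i:ℕ) = (i':ℕ)+1 ∧ c = (1, i', j) := by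
  obtain ⟨ck, ci, cj⟩ := c
  rw [ZT, SimpleGraph.fromRel_adj]
  dsimp only
  constructor
  · rintro ⟨hne, (⟨_, h1, h2, h3⟩|⟨h0,_⟩|⟨h0,_⟩) | (⟨_,h0,_⟩|⟨h1,_,h2,h3⟩|⟨h1,_,h2,h3⟩)⟩
    · exact Or.inl (by simp_all [Prod.ext_iff])
    · exact absurd h0 (by decide)
    · exact absurd h0 (by decide)
    · exact absurd h0 (by decide)
    · refine Or.inr (Or.inl ?_)
      simp only [Prod.mk.injEq]
      exact ⟨h1, h2, eq_sub_of_add_eq h3.symm⟩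
    · exact Or.inr (Or.inr ⟨ci, h2, by simp_all [Prod.ext_iff]⟩)
  · rintro (h | h | ⟨i', hi', h⟩) <;>
      (injection h with h1 h2; injection h2 with h2 h3; subst h1 h2 h3)
    · exact ⟨by simp [Prod.ext_iff], Or.inl (Or.inl ⟨rfl, rfl, rfl, rfl⟩)⟩
    · exact ⟨by simp [Prod.ext_iff], Or.inr (Or.inr (Or.inl ⟨rfl, rfl, rfl, by ring⟩))⟩
    · exact ⟨by simp [Prod.ext_iff], Or.inr (Or.inr (Or.inr ⟨rfl, rfl, hi', rfl⟩))⟩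

lemma adj_one {n h : ℕ} (i : Fin (n+1)) (j : ZMod h) (c : ZTVert n h) :
    (ZT n h).Adj (1, i, j) c ↔
      c = (0, i, j) ∨ c = (0, i, j + 1) ∨ ∃ i' : Fin (n+1), (i':ℕ) = (i:ℕ)+1 ∧ c = (0, i', j) := by
  obtain ⟨ck, ci, cj⟩ := c
  rw [ZT, SimpleGraph.fromRel_adj]
  dsimp only
  constructor
  · rintro ⟨hne, (⟨h0,_⟩|⟨_,h1,h2,h3⟩|⟨_,h1,h2,h3⟩) | (⟨h1,_,h2,h3⟩|⟨_,h0,_⟩|⟨_,h0,_⟩)⟩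
    · exact absurd h0 (by decide)
    · exact Or.inr (Or.inl (by simp_all [Prod.ext_iff]))
    · exact Or.inr (Or.inr ⟨ci, h2, by simp_all [Prod.ext_iff]⟩)
    · exact Or.inl (by simp_all [Prod.ext_iff])
    · exact absurd h0 (by decide)
    · exact absurd h0 (by decide)
  · rintro (h | h | ⟨i', hi', h⟩) <;>
      (injection h with h1 h2; injection h2 with h2 h3; subst h1 h2 h3)
    · exact ⟨by simp [Prod.ext_iff], Or.inr (Or.inl ⟨rfl, rfl, rfl, rfl⟩)⟩
    · exact ⟨by simp [Prod.ext_iff], Or.inl (Or.inr (Or.inl ⟨rfl, rfl, rfl, rfl⟩))⟩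
    · exact ⟨by simp [Prod.ext_iff], Or.inl (Or.inr (Or.inr ⟨rfl, rfl, hi', rfl⟩))⟩

def Deg2 (n h : ℕ) (v : ZTVert n h) : Prop :=
  ∃ a b, a ≠ b ∧ (ZT n h).Adj v a ∧ (ZT n h).Adj v b ∧
    ∀ c, (ZT n h).Adj v c → c = a ∨ c = b

lemma fin2 (x : Fin 2) : x = 0 ∨ x = 1 := by fin_cases x <;> simp

lemma three {α : Type*} {x y z a b : α} (hxy : x ≠ y) (hxz : x ≠ z) (hyz : y ≠ z)
    (hx : x = a ∨ x = b) (hy : y = a ∨ y = b) (hz : z = a ∨ z = b) : False := by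
  rcases hx with rfl | rfl <;> rcases hy with rfl | rfl <;> rcases hz with rfl | rfl <;> simp_all

lemma deg2_zero {n h : ℕ} (hh : 2 ≤ h) (i : Fin (n+1)) (j : ZMod h) :
    Deg2 n h (0, i, j) ↔ (i : ℕ) = 0 := by
  haveI : Fact (1 < h) := ⟨by omega⟩
  have hsub : j - 1 ≠ j := fun e => one_ne_zero (sub_eq_self.mp e)
  constructor
  · rintro ⟨a, b, hab, ha, hb, hcov⟩
    by_contra hi
    have hlt : 0 < (i : ℕ) := Nat.pos_of_ne_zero hi
    have hlt2 : (i : ℕ) < n + 1 := i.isLt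
    set i' : Fin (n+1) := ⟨(i : ℕ) - 1, by omega⟩ with hi'
    have hx := hcov (1, i, j) ((adj_zero i j _).mpr (Or.inl rfl))
    have hy := hcov (1, i, j - 1) ((adj_zero i j _).mpr (Or.inr (Or.inl rfl)))
    have hz := hcov (1, i', j) ((adj_zero i j _).mpr (Or.inr (Or.inr ⟨i', by simp [hi']; omega, rfl⟩)))
    have d1 : (1, i, j) ≠ ((1, i, j - 1) : ZTVert n h) := by
      simp only [ne_eq, Prod.mk.injEq, true_and]; exact fun e => hsub e.symm
    have d2 : (1, i, j) ≠ ((1, i', j) : ZTVert n h) := by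
      simp only [ne_eq, Prod.mk.injEq, true_and]
      intro e; exact absurd (congrArg Fin.val e.1) (by simp [hi']; omega)
    have d3 : (1, i, j - 1) ≠ ((1, i', j) : ZTVert n h) := by
      simp only [ne_eq, Prod.mk.injEq, true_and]
      intro e; exact absurd (congrArg Fin.val e.1) (by simp [hi']; omega)
    exact three d1 d2 d3 hx hy hz
  · intro hi
    have hi0 : i = 0 := Fin.ext hi
    subst hi0
    refine ⟨(1, 0, j), (1, 0, j - 1),
      by simp only [ne_eq, Prod.mk.injEq, true_and]; exact fun e => hsub e.symm,
      (adj_zero 0 j _).mpr (Or.inl rfl), (adj_zero 0 j _).mpr (Or.inr (Or.inl rfl)), ?_⟩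
    intro c hc
    rcases (adj_zero 0 j c).mp hc with rfl | rfl | ⟨i', hi', rfl⟩
    · exact Or.inl rfl
    · exact Or.inr rfl
    · exact absurd hi' (by simp)

lemma deg2_one {n h : ℕ} (hh : 2 ≤ h) (i : Fin (n+1)) (j : ZMod h) :
    Deg2 n h (1, i, j) ↔ (i : ℕ) = n := by
  haveI : Fact (1 < h) := ⟨by omega⟩
  have hadd : j + 1 ≠ j := fun e => one_ne_zero (add_eq_left.mp e)
  constructor
  · rintro ⟨a, b, hab, ha, hb, hcov⟩
    by_contra hi
    have hlt2 : (i : ℕ) < n + 1 := i.isLt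
    have hlt : (i : ℕ) < n := by omega
    set i' : Fin (n+1) := ⟨(i : ℕ) + 1, by omega⟩ with hi'
    have hx := hcov (0, i, j) ((adj_one i j _).mpr (Or.inl rfl))
    have hy := hcov (0, i, j + 1) ((adj_one i j _).mpr (Or.inr (Or.inl rfl)))
    have hz := hcov (0, i', j) ((adj_one i j _).mpr (Or.inr (Or.inr ⟨i', by simp [hi'], rfl⟩)))
    have d1 : (0, i, j) ≠ ((0, i, j + 1) : ZTVert n h) := by
      simp only [ne_eq, Prod.mk.injEq, true_and]; exact fun e => hadd e.symm
    have d2 : (0, i, j) ≠ ((0, i', j) : ZTVert n h) := by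
      simp only [ne_eq, Prod.mk.injEq, true_and]
      intro e; exact absurd (congrArg Fin.val e.1) (by simp [hi'])
    have d3 : (0, i, j + 1) ≠ ((0, i', j) : ZTVert n h) := by
      simp only [ne_eq, Prod.mk.injEq, true_and]
      intro e; exact absurd (congrArg Fin.val e.1) (by simp [hi'])
    exact three d1 d2 d3 hx hy hz
  · intro hi
    refine ⟨(0, i, j), (0, i, j + 1),
      by simp only [ne_eq, Prod.mk.injEq, true_and]; exact fun e => hadd e.symm,
      (adj_one i j _).mpr (Or.inl rfl), (adj_one i j _).mpr (Or.inr (Or.inl rfl)), ?_⟩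
    intro c hc
    rcases (adj_one i j c).mp hc with rfl | rfl | ⟨i', hi', rfl⟩
    · exact Or.inl rfl
    · exact Or.inr rfl
    · exact absurd hi' (by have := i'.isLt; omega)

lemma deg2_dest {n h : ℕ} (hh : 2 ≤ h) (v : ZTVert n h) (hd : Deg2 n h v) :
    (v.1 = 0 ∧ (v.2.1 : ℕ) = 0) ∨ (v.1 = 1 ∧ (v.2.1 : ℕ) = n) := by
  obtain ⟨k, i, j⟩ := v
  rcases fin2 k with rfl | rfl
  · exact Or.inl ⟨rfl, (deg2_zero hh i j).mp hd⟩
  · exact Or.inr ⟨rfl, (deg2_one hh i j).mp hd⟩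

lemma adj_k_ne {n h : ℕ} (a b : ZTVert n h) (hab : (ZT n h).Adj a b) : a.1 ≠ b.1 := by
  obtain ⟨k, i, j⟩ := a
  rcases fin2 k with rfl | rfl
  · rcases (adj_zero i j b).mp hab with rfl | rfl | ⟨i', _, rfl⟩ <;> simp
  · rcases (adj_one i j b).mp hab with rfl | rfl | ⟨i', _, rfl⟩ <;> simp

lemma common_k {n h : ℕ} {a b c : ZTVert n h}
    (h1 : (ZT n h).Adj a c) (h2 : (ZT n h).Adj b c) : a.1 = b.1 := by
  have u := adj_k_ne a c h1
  have v := adj_k_ne b c h2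
  rcases fin2 a.1 with e1 | e1 <;> rcases fin2 b.1 with e2 | e2 <;>
    rcases fin2 c.1 with e3 | e3 <;> simp_all

lemma deg2_map {n h : ℕ} (φ : ZT n h ≃g ZT n h) (v : ZTVert n h) (hd : Deg2 n h v) :
    Deg2 n h (φ v) := by
  obtain ⟨a, b, hab, ha, hb, hcov⟩ := hd
  refine ⟨φ a, φ b, fun e => hab (φ.injective e), φ.map_adj_iff.mpr ha, φ.map_adj_iff.mpr hb, ?_⟩
  intro c hc
  have hc' : (ZT n h).Adj v (φ.symm c) := by
    have := φ.map_adj_iff (v := v) (w := φ.symm c)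
    rw [φ.apply_symm_apply] at this
    exact this.mp hc
  rcases hcov _ hc' with e | e
  · exact Or.inl (by rw [← φ.apply_symm_apply c, e])
  · exact Or.inr (by rw [← φ.apply_symm_apply c, e])

lemma fin2_const {h : ℕ} (hh : 2 ≤ h) (g : ZMod h → Fin 2)
    (hg : ∀ j, g (j + 1) = g j) (j : ZMod h) : g j = g 0 := by
  haveI : NeZero h := ⟨by omega⟩
  obtain ⟨m, rfl⟩ := ZMod.natCast_zmod_surjective j
  induction m with
  | zero => simp
  | succ m ih => push_cast; rw [hg]; exact ih

lemma img_row0 {n h : ℕ} (hh : 2 ≤ h) (φ : ZT n h ≃g ZT n h) :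
    (∀ j : ZMod h, φ (0, 0, j) ∈ ZTVset n h 0 0) ∨
    (∀ j : ZMod h, φ (0, 0, j) ∈ ZTVset n h 1 n) := by
  have hd : ∀ j : ZMod h, Deg2 n h (φ (0, 0, j)) :=
    fun j => deg2_map φ _ ((deg2_zero hh 0 j).mpr rfl)
  have hg : ∀ j : ZMod h, (φ (0, 0, j + 1)).1 = (φ (0, 0, j)).1 := by
    intro j
    have h1 : (ZT n h).Adj (0, 0, j) (1, 0, j) := (adj_zero 0 j _).mpr (Or.inl rfl)
    have h2 : (ZT n h).Adj (0, 0, j + 1) (1, 0, j) :=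
      (adj_zero 0 (j + 1) _).mpr (Or.inr (Or.inl (by rw [add_sub_cancel_right])))
    exact common_k (φ.map_adj_iff.mpr h2) (φ.map_adj_iff.mpr h1)
  have hconst : ∀ j : ZMod h, (φ (0, 0, j)).1 = (φ (0, 0, (0 : ZMod h))).1 :=
    fin2_const hh (fun j => (φ (0, 0, j)).1) hg
  rcases fin2 ((φ (0, 0, (0 : ZMod h))).1) with h0 | h0
  · left; intro j
    rcases deg2_dest hh _ (hd j) with ⟨hk, hi⟩ | ⟨hk, hi⟩
    · exact ⟨hk, hi⟩
    · rw [hconst j, h0] at hk; exact absurd hk (by decide)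
  · right; intro j
    rcases deg2_dest hh _ (hd j) with ⟨hk, hi⟩ | ⟨hk, hi⟩
    · rw [hconst j, h0] at hk; exact absurd hk (by decide)
    · exact ⟨hk, hi⟩

lemma img_rown {n h : ℕ} (hh : 2 ≤ h) (φ : ZT n h ≃g ZT n h) :
    (∀ j : ZMod h, φ (1, ⟨n, Nat.lt_succ_self n⟩, j) ∈ ZTVset n h 0 0) ∨
    (∀ j : ZMod h, φ (1, ⟨n, Nat.lt_succ_self n⟩, j) ∈ ZTVset n h 1 n) := by
  set iN : Fin (n + 1) := ⟨n, Nat.lt_succ_self n⟩ with hiN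
  have hd : ∀ j : ZMod h, Deg2 n h (φ (1, iN, j)) :=
    fun j => deg2_map φ _ ((deg2_one hh iN j).mpr rfl)
  have hg : ∀ j : ZMod h, (φ (1, iN, j + 1)).1 = (φ (1, iN, j)).1 := by
    intro j
    have h1 : (ZT n h).Adj (1, iN, j) (0, iN, j + 1) := (adj_one iN j _).mpr (Or.inr (Or.inl rfl))
    have h2 : (ZT n h).Adj (1, iN, j + 1) (0, iN, j + 1) := (adj_one iN (j + 1) _).mpr (Or.inl rfl)
    exact common_k (φ.map_adj_iff.mpr h2) (φ.map_adj_iff.mpr h1)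
  have hconst : ∀ j : ZMod h, (φ (1, iN, j)).1 = (φ (1, iN, (0 : ZMod h))).1 :=
    fin2_const hh (fun j => (φ (1, iN, j)).1) hg
  rcases fin2 ((φ (1, iN, (0 : ZMod h))).1) with h0 | h0
  · left; intro j
    rcases deg2_dest hh _ (hd j) with ⟨hk, hi⟩ | ⟨hk, hi⟩
    · exact ⟨hk, hi⟩
    · rw [hconst j, h0] at hk; exact absurd hk (by decide)
  · right; intro j
    rcases deg2_dest hh _ (hd j) with ⟨hk, hi⟩ | ⟨hk, hi⟩
    · rw [hconst j, h0] at hk; exact absurd hk (by decide)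
    · exact ⟨hk, hi⟩

lemma mem_vset {n h : ℕ} {v : ZTVert n h} {k : Fin 2} {i : ℕ} :
    v ∈ ZTVset n h k i ↔ v.1 = k ∧ (v.2.1 : ℕ) = i := Iff.rfl

lemma nbr_V00 {n h : ℕ} {w c : ZTVert n h} (hw : w ∈ ZTVset n h 0 0)
    (hadj : (ZT n h).Adj w c) : c ∈ ZTVset n h 1 0 := by
  obtain ⟨k, i, j⟩ := w
  obtain ⟨hk, hi⟩ := hw
  dsimp at hk hi; subst hk
  rcases (adj_zero i j c).mp hadj with rfl | rfl | ⟨i', hi', rfl⟩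
  · exact ⟨rfl, hi⟩
  · exact ⟨rfl, hi⟩
  · omega

lemma nbr_V1n {n h : ℕ} {w c : ZTVert n h} (hw : w ∈ ZTVset n h 1 n)
    (hadj : (ZT n h).Adj w c) : c ∈ ZTVset n h 0 n := by
  obtain ⟨k, i, j⟩ := w
  obtain ⟨hk, hi⟩ := hw
  dsimp at hk hi; subst hk
  rcases (adj_one i j c).mp hadj with rfl | rfl | ⟨i', hi', rfl⟩
  · exact ⟨rfl, hi⟩
  · exact ⟨rfl, hi⟩
  · have := i'.isLt; omega

-- every vertex of V00 has the form (0,0,j), etc.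
lemma V00_form {n h : ℕ} {v : ZTVert n h} (hv : v ∈ ZTVset n h 0 0) :
    v = (0, 0, v.2.2) := by
  obtain ⟨k, i, j⟩ := v
  obtain ⟨hk, hi⟩ := hv
  dsimp at hk hi ⊢
  have hi2 : i = 0 := Fin.val_injective (by simpa using hi)
  rw [hk, hi2]

lemma V10_form {n h : ℕ} {v : ZTVert n h} (hv : v ∈ ZTVset n h 1 0) :
    v = (1, 0, v.2.2) := by
  obtain ⟨k, i, j⟩ := v
  obtain ⟨hk, hi⟩ := hv
  dsimp at hk hi ⊢
  have hi2 : i = 0 := Fin.val_injective (by simpa using hi)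
  rw [hk, hi2]

lemma V1n_form {n h : ℕ} {v : ZTVert n h} (hv : v ∈ ZTVset n h 1 n) :
    v = (1, ⟨n, Nat.lt_succ_self n⟩, v.2.2) := by
  obtain ⟨k, i, j⟩ := v
  obtain ⟨hk, hi⟩ := hv
  dsimp at hk hi ⊢
  have hi2 : i = ⟨n, Nat.lt_succ_self n⟩ := Fin.val_injective (by simpa using hi)
  rw [hk, hi2]

lemma V0n_form {n h : ℕ} {v : ZTVert n h} (hv : v ∈ ZTVset n h 0 n) :
    v = (0, ⟨n, Nat.lt_succ_self n⟩, v.2.2) := by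
  obtain ⟨k, i, j⟩ := v
  obtain ⟨hk, hi⟩ := hv
  dsimp at hk hi ⊢
  have hi2 : i = ⟨n, Nat.lt_succ_self n⟩ := Fin.val_injective (by simpa using hi)
  rw [hk, hi2]

/-- If `φ` is an automorphism of `ZT(n,h)`, then the image of the
vertex set `V(C₁) = V⁰₀ ∪ V¹₀` under `φ` is either `V(C₁)` or `V(C₂) = V⁰ₙ ∪ V¹ₙ`. -/
theorem aut_image_boundary_cycle (n h : ℕ) (hn : 1 ≤ n) (hh : 2 ≤ h)
    (φ : ZT n h ≃g ZT n h) :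
    ⇑φ '' (ZTVset n h 0 0 ∪ ZTVset n h 1 0) = ZTVset n h 0 0 ∪ ZTVset n h 1 0 ∨
    ⇑φ '' (ZTVset n h 0 0 ∪ ZTVset n h 1 0) = ZTVset n h 0 n ∪ ZTVset n h 1 n := by
  set iN : Fin (n + 1) := ⟨n, Nat.lt_succ_self n⟩ with hiN
  have setA : ∀ (ψ : ZT n h ≃g ZT n h),
      (∀ v ∈ ZTVset n h 0 0, ψ v ∈ ZTVset n h 0 0) ∨
      (∀ v ∈ ZTVset n h 0 0, ψ v ∈ ZTVset n h 1 n) := by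
    intro ψ
    rcases img_row0 hh ψ with H | H
    · exact Or.inl fun v hv => by rw [V00_form hv]; exact H v.2.2
    · exact Or.inr fun v hv => by rw [V00_form hv]; exact H v.2.2
  have setB : ∀ (ψ : ZT n h ≃g ZT n h),
      (∀ v ∈ ZTVset n h 1 n, ψ v ∈ ZTVset n h 0 0) ∨
      (∀ v ∈ ZTVset n h 1 n, ψ v ∈ ZTVset n h 1 n) := by
    intro ψ
    rcases img_rown hh ψ with H | H
    · exact Or.inl fun v hv => by rw [V1n_form hv]; exact H v.2.2
    · exact Or.inr fun v hv => by rw [V1n_form hv]; exact H v.2.2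
  have hd00 : ((0, 0, (0:ZMod h)) : ZTVert n h) ∈ ZTVset n h 0 0 := ⟨rfl, rfl⟩
  have hd1n : ((1, iN, (0:ZMod h)) : ZTVert n h) ∈ ZTVset n h 1 n := ⟨rfl, rfl⟩
  rcases setA φ with hA | hA
  · -- φ maps V00 into V00
    have hB2 : ∀ v ∈ ZTVset n h 1 n, φ v ∈ ZTVset n h 1 n := by
      rcases setB φ with hB | hB
      · exfalso
        have hde : Deg2 n h (φ.symm (1, iN, (0:ZMod h))) :=
          deg2_map φ.symm _ ((deg2_one hh iN 0).mpr rfl)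
        rcases deg2_dest hh _ hde with he | he
        · have := hA _ he
          rw [φ.apply_symm_apply] at this
          exact absurd this.1 (by simp)
        · have := hB _ he
          rw [φ.apply_symm_apply] at this
          exact absurd this.1 (by simp)
      · exact hB
    have hA' : ∀ v ∈ ZTVset n h 0 0, φ.symm v ∈ ZTVset n h 0 0 := by
      rcases setA φ.symm with h' | h'
      · exact h'
      · exfalso
        have := hB2 _ (h' _ hd00)
        rw [φ.apply_symm_apply] at this
        exact absurd this.1 (by simp)
    left
    apply Set.eq_of_subset_of_subset
    · rintro w ⟨u, hu, rfl⟩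
      rcases hu with hu | hu
      · exact Or.inl (hA u hu)
      · have hx : ((0, 0, u.2.2) : ZTVert n h) ∈ ZTVset n h 0 0 := ⟨rfl, rfl⟩
        have hadj : (ZT n h).Adj (0, 0, u.2.2) u := by
          have : (ZT n h).Adj (0, 0, u.2.2) (1, 0, u.2.2) := (adj_zero 0 _ _).mpr (Or.inl rfl)
          rwa [← V10_form hu] at this
        exact Or.inr (nbr_V00 (hA _ hx) (φ.map_adj_iff.mpr hadj))
    · intro w hw
      refine ⟨φ.symm w, ?_, φ.apply_symm_apply w⟩
      rcases hw with hw | hw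
      · exact Or.inl (hA' _ hw)
      · have hx : ((0, 0, w.2.2) : ZTVert n h) ∈ ZTVset n h 0 0 := ⟨rfl, rfl⟩
        have hadj : (ZT n h).Adj (0, 0, w.2.2) w := by
          have : (ZT n h).Adj (0, 0, w.2.2) (1, 0, w.2.2) := (adj_zero 0 _ _).mpr (Or.inl rfl)
          rwa [← V10_form hw] at this
        exact Or.inr (nbr_V00 (hA' _ hx) (φ.symm.map_adj_iff.mpr hadj))
  · -- φ maps V00 into V1n
    have hB2 : ∀ v ∈ ZTVset n h 1 n, φ v ∈ ZTVset n h 0 0 := by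
      rcases setB φ with hB | hB
      · exact hB
      · exfalso
        have hde : Deg2 n h (φ.symm (0, 0, (0:ZMod h))) :=
          deg2_map φ.symm _ ((deg2_zero hh 0 0).mpr rfl)
        rcases deg2_dest hh _ hde with he | he
        · have := hA _ he
          rw [φ.apply_symm_apply] at this
          exact absurd this.1 (by simp)
        · have := hB _ he
          rw [φ.apply_symm_apply] at this
          exact absurd this.1 (by simp)
    have hB' : ∀ v ∈ ZTVset n h 1 n, φ.symm v ∈ ZTVset n h 0 0 := by
      rcases setB φ.symm with h' | h'
      · exact h'
      · exfalso
        have := hB2 _ (h' _ hd1n)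
        rw [φ.apply_symm_apply] at this
        exact absurd this.1 (by simp)
    right
    apply Set.eq_of_subset_of_subset
    · rintro w ⟨u, hu, rfl⟩
      rcases hu with hu | hu
      · exact Or.inr (hA u hu)
      · have hx : ((0, 0, u.2.2) : ZTVert n h) ∈ ZTVset n h 0 0 := ⟨rfl, rfl⟩
        have hadj : (ZT n h).Adj (0, 0, u.2.2) u := by
          have : (ZT n h).Adj (0, 0, u.2.2) (1, 0, u.2.2) := (adj_zero 0 _ _).mpr (Or.inl rfl)
          rwa [← V10_form hu] at this
        exact Or.inl (nbr_V1n (hA _ hx) (φ.map_adj_iff.mpr hadj))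
    · intro w hw
      refine ⟨φ.symm w, ?_, φ.apply_symm_apply w⟩
      rcases hw with hw | hw
      · have hy : ((1, iN, w.2.2) : ZTVert n h) ∈ ZTVset n h 1 n := ⟨rfl, rfl⟩
        have hadj : (ZT n h).Adj (1, iN, w.2.2) w := by
          have : (ZT n h).Adj (1, iN, w.2.2) (0, iN, w.2.2) := (adj_one iN _ _).mpr (Or.inl rfl)
          rwa [← V0n_form hw] at this
        exact Or.inr (nbr_V00 (hB' _ hy) (φ.symm.map_adj_iff.mpr hadj))
      · exact Or.inl (hB' _ hw)

-- #print axioms check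
end

section
/- Let n ≥ 1 be odd and h ≥ 2. Then the orbits of the natural action of Aut(ZT(n,h)) on V(ZT(n,h)) are exactly the sets O^0_i = V^0_i ∪ V^1_{n−i} for i ∈ {0, …, (n−1)/2} and O^1_i = V^1_i ∪ V^0_{n−i} for i ∈ {0, …, (n−1)/2}. -/
open SimpleGraph

/-- The orbit of a vertex `u` under the natural action of `Aut(G)` on `V(G)`. -/
def graphOrbit {V : Type*} (G : SimpleGraph V) (u : V) : Set V :=
  {v | ∃ α : G ≃g G, α u = v}

namespace ZTaux
variable {n h : ℕ}
def R (a b : ZTVert n h) : Prop :=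
    (a.1 = 0 ∧ b.1 = 1 ∧ a.2.1 = b.2.1 ∧ a.2.2 = b.2.2) ∨
    (a.1 = 1 ∧ b.1 = 0 ∧ a.2.1 = b.2.1 ∧ b.2.2 = a.2.2 + 1) ∨
    (a.1 = 1 ∧ b.1 = 0 ∧ (b.2.1 : ℕ) = (a.2.1 : ℕ) + 1 ∧ a.2.2 = b.2.2)
lemma ZT_adj {a b : ZTVert n h} : (ZT n h).Adj a b ↔ a ≠ b ∧ (R a b ∨ R b a) := by
  rw [ZT, fromRel_adj]; rfl
def fV (v : ZTVert n h) : ℕ := 2 * (v.2.1 : ℕ) + (v.1 : ℕ)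
def mV (v : ZTVert n h) : ℕ := min (fV v) (2 * n + 1 - fV v)
lemma fV_le (v : ZTVert n h) : fV v ≤ 2 * n + 1 := by
  have h1 : (v.2.1 : ℕ) ≤ n := Nat.lt_succ_iff.mp v.2.1.isLt
  have h2 : (v.1 : ℕ) ≤ 1 := Nat.lt_succ_iff.mp v.1.isLt
  unfold fV; omega

lemma fin2_val {k : Fin 2} (hk : k = 0) : (k : ℕ) = 0 := by subst hk; rfl
lemma fin2_val' {k : Fin 2} (hk : k = 1) : (k : ℕ) = 1 := by subst hk; rfl
lemma R_fV {a b : ZTVert n h} (hr : R a b) : fV a = fV b + 1 ∨ fV b = fV a + 1 := by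
  unfold fV
  rcases hr with ⟨h1, h2, h3, -⟩ | ⟨h1, h2, h3, -⟩ | ⟨h1, h2, h3, -⟩ <;>
    first
      | (have e1 := fin2_val h1; have e2 := fin2_val' h2;
         have e3 := congrArg Fin.val h3; omega)
      | (have e1 := fin2_val' h1; have e2 := fin2_val h2;
         first
           | (have e3 := congrArg Fin.val h3; omega)
           | omega)

lemma adj_fV {a b : ZTVert n h} (hab : (ZT n h).Adj a b) :
    fV a = fV b + 1 ∨ fV b = fV a + 1 := by
  rw [ZT_adj] at hab
  obtain ⟨-, hr | hr⟩ := hab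
  · exact R_fV hr
  · exact (R_fV hr).symm

lemma adj_mV {a b : ZTVert n h} (hab : (ZT n h).Adj a b) :
    mV a = mV b + 1 ∨ mV b = mV a + 1 ∨ (mV a = n ∧ mV b = n) := by
  have h1 := fV_le a
  have h2 := fV_le b
  have h3 := adj_fV hab
  unfold mV
  omega


def hasTriple (v : ZTVert n h) : Prop :=
  ∃ w₁ w₂ w₃ : ZTVert n h, (ZT n h).Adj v w₁ ∧ (ZT n h).Adj v w₂ ∧ (ZT n h).Adj v w₃ ∧
    w₁ ≠ w₂ ∧ w₁ ≠ w₃ ∧ w₂ ≠ w₃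

lemma one_ne_zero_zmod (hh : 2 ≤ h) : (1 : ZMod h) ≠ 0 := by
  haveI : Fact (1 < h) := ⟨hh⟩
  exact one_ne_zero

lemma no_triple_of_mV_zero {v : ZTVert n h} (hv : mV v = 0) : ¬ hasTriple v := by
  have hfle := fV_le v
  have hf : fV v = 0 ∨ fV v = 2 * n + 1 := by unfold mV at hv; omega
  have hk : (v.1 : ℕ) < 2 := v.1.isLt
  have hi : (v.2.1 : ℕ) ≤ n := Nat.lt_succ_iff.mp v.2.1.isLt
  unfold fV at hf
  -- all neighbours lie in a two-element set
  obtain ⟨x, y, hxy⟩ : ∃ x y : ZTVert n h, ∀ w, (ZT n h).Adj v w → w = x ∨ w = y := by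
    rcases hf with hf | hf
    · -- v = (0, 0, j)
      have hk0 : v.1 = 0 := by ext; omega
      have hi0 : (v.2.1 : ℕ) = 0 := by omega
      refine ⟨(1, v.2.1, v.2.2), (1, v.2.1, v.2.2 - 1), fun w hw => ?_⟩
      rw [ZT_adj] at hw
      obtain ⟨hne, hr | hr⟩ := hw <;>
        rcases hr with ⟨h1, h2, h3, h4⟩ | ⟨h1, h2, h3, h4⟩ | ⟨h1, h2, h3, h4⟩
      · left
        obtain ⟨wk, wi, wj⟩ := w
        simp only [Prod.mk.injEq]
        exact ⟨h2, h3.symm, h4.symm⟩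
      · rw [hk0] at h1; exact absurd (congrArg Fin.val h1) (by simp)
      · rw [hk0] at h1; exact absurd (congrArg Fin.val h1) (by simp)
      · rw [hk0] at h2; exact absurd (congrArg Fin.val h2) (by simp)
      · right
        obtain ⟨wk, wi, wj⟩ := w
        simp only [Prod.mk.injEq]
        refine ⟨h1, h3, ?_⟩
        show wj = v.2.2 - 1
        rw [h4]; ring
      · exfalso
        omega
    · -- v = (1, n, j)
      have hk1 : v.1 = 1 := by ext; simp; omega
      have hin : (v.2.1 : ℕ) = n := by omega
      refine ⟨(0, v.2.1, v.2.2), (0, v.2.1, v.2.2 + 1), fun w hw => ?_⟩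
      rw [ZT_adj] at hw
      obtain ⟨hne, hr | hr⟩ := hw <;>
        rcases hr with ⟨h1, h2, h3, h4⟩ | ⟨h1, h2, h3, h4⟩ | ⟨h1, h2, h3, h4⟩
      · rw [hk1] at h1; exact absurd (congrArg Fin.val h1) (by simp)
      · right
        obtain ⟨wk, wi, wj⟩ := w
        simp only [Prod.mk.injEq]
        exact ⟨h2, h3.symm, h4⟩
      · exfalso
        have h5 := h3
        have : (w.2.1 : ℕ) ≤ n := Nat.lt_succ_iff.mp w.2.1.isLt
        omega
      · left
        obtain ⟨wk, wi, wj⟩ := w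
        simp only [Prod.mk.injEq]
        exact ⟨h1, h3, h4⟩
      · rw [hk1] at h2; exact absurd (congrArg Fin.val h2) (by simp)
      · rw [hk1] at h2; exact absurd (congrArg Fin.val h2) (by simp)
  rintro ⟨w₁, w₂, w₃, a1, a2, a3, d12, d13, d23⟩
  rcases hxy w₁ a1 with rfl | rfl <;> rcases hxy w₂ a2 with rfl | rfl <;>
    rcases hxy w₃ a3 with rfl | rfl <;> simp_all

lemma triple_of_mV_pos (hh : 2 ≤ h) {v : ZTVert n h} (hv : mV v ≠ 0) : hasTriple v := by
  have hfle := fV_le v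
  have hone : (1 : ZMod h) ≠ 0 := one_ne_zero_zmod hh
  have hf : fV v ≠ 0 ∧ fV v ≠ 2 * n + 1 := by unfold mV at hv; omega
  obtain ⟨k, i, j⟩ := v
  have hi : (i : ℕ) ≤ n := Nat.lt_succ_iff.mp i.isLt
  have hfv : fV ((k, i, j) : ZTVert n h) = 2 * (i : ℕ) + (k : ℕ) := rfl
  rw [hfv] at hf
  have hjne : j ≠ j - 1 := by
    intro hcon
    apply hone
    have : j - (j - 1) = 0 := by rw [← hcon]; ring
    rw [sub_sub_cancel] at this
    exact this
  have hjne' : j ≠ j + 1 := by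
    intro hcon
    apply hone
    have := congrArg (fun x => x - j) hcon
    simp at this
    exact this.symm
  fin_cases k
  · -- k = 0 : i ≥ 1
    simp only [Fin.val_zero] at hf
    have hi1 : 1 ≤ (i : ℕ) := by omega
    refine ⟨(1, i, j), (1, i, j - 1), (1, ⟨(i : ℕ) - 1, by omega⟩, j), ?_, ?_, ?_, ?_, ?_, ?_⟩
    · rw [ZT_adj]
      exact ⟨fun hcon => absurd (congrArg (fun x => (x.1 : ℕ)) hcon) (by simp),
        Or.inl (Or.inl ⟨rfl, rfl, rfl, rfl⟩)⟩
    · rw [ZT_adj]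
      refine ⟨fun hcon => absurd (congrArg (fun x => (x.1 : ℕ)) hcon) (by simp),
        Or.inr (Or.inr (Or.inl ⟨rfl, rfl, rfl, ?_⟩))⟩
      show j = (j - 1) + 1
      ring
    · rw [ZT_adj]
      refine ⟨fun hcon => absurd (congrArg (fun x => (x.1 : ℕ)) hcon) (by simp),
        Or.inr (Or.inr (Or.inr ⟨rfl, rfl, ?_, rfl⟩))⟩
      show (i : ℕ) = ((i : ℕ) - 1) + 1
      omega
    · intro hcon
      exact hjne (congrArg (fun x => x.2.2) hcon)
    · intro hcon
      have := congrArg (fun x => (x.2.1 : ℕ)) hcon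
      simp only at this
      omega
    · intro hcon
      have := congrArg (fun x => (x.2.1 : ℕ)) hcon
      simp only at this
      omega
  · -- k = 1 : i ≤ n - 1
    simp only [Fin.val_one] at hf
    have hi1 : (i : ℕ) + 1 ≤ n := by omega
    refine ⟨(0, i, j), (0, i, j + 1), (0, ⟨(i : ℕ) + 1, by omega⟩, j), ?_, ?_, ?_, ?_, ?_, ?_⟩
    · rw [ZT_adj]
      exact ⟨fun hcon => absurd (congrArg (fun x => (x.1 : ℕ)) hcon) (by simp),
        Or.inr (Or.inl ⟨rfl, rfl, rfl, rfl⟩)⟩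
    · rw [ZT_adj]
      exact ⟨fun hcon => absurd (congrArg (fun x => (x.1 : ℕ)) hcon) (by simp),
        Or.inl (Or.inr (Or.inl ⟨rfl, rfl, rfl, rfl⟩))⟩
    · rw [ZT_adj]
      exact ⟨fun hcon => absurd (congrArg (fun x => (x.1 : ℕ)) hcon) (by simp),
        Or.inl (Or.inr (Or.inr ⟨rfl, rfl, rfl, rfl⟩))⟩
    · intro hcon
      exact hjne' (congrArg (fun x => x.2.2) hcon)
    · intro hcon
      have := congrArg (fun x => (x.2.1 : ℕ)) hcon
      simp only at this
      omega
    · intro hcon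
      have := congrArg (fun x => (x.2.1 : ℕ)) hcon
      simp only at this
      omega

lemma mV_le (v : ZTVert n h) : mV v ≤ n := by
  have := fV_le v; unfold mV; omega

def rotEquiv (c : ZMod h) : ZTVert n h ≃ ZTVert n h where
  toFun v := (v.1, v.2.1, v.2.2 + c)
  invFun v := (v.1, v.2.1, v.2.2 - c)
  left_inv v := by obtain ⟨k, i, j⟩ := v; simp
  right_inv v := by obtain ⟨k, i, j⟩ := v; simp

lemma R_rot (c : ZMod h) {a b : ZTVert n h} (hr : R a b) :
    R (rotEquiv c a) (rotEquiv c b) := by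
  obtain ⟨k, i, j⟩ := a; obtain ⟨k', i', j'⟩ := b
  unfold R at hr ⊢
  simp only [rotEquiv, Equiv.coe_fn_mk]
  rcases hr with ⟨h1, h2, h3, h4⟩ | ⟨h1, h2, h3, h4⟩ | ⟨h1, h2, h3, h4⟩ <;>
    dsimp only at h1 h2 h3 h4 ⊢
  · exact Or.inl ⟨h1, h2, h3, by rw [h4]⟩
  · exact Or.inr (Or.inl ⟨h1, h2, h3, by rw [h4]; ring⟩)
  · exact Or.inr (Or.inr ⟨h1, h2, h3, by rw [h4]⟩)

lemma adj_rot (c : ZMod h) {a b : ZTVert n h} (hab : (ZT n h).Adj a b) :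
    (ZT n h).Adj (rotEquiv c a) (rotEquiv c b) := by
  rw [ZT_adj] at hab ⊢
  obtain ⟨hne, hr | hr⟩ := hab
  · exact ⟨fun hcon => hne ((rotEquiv c).injective hcon), Or.inl (R_rot c hr)⟩
  · exact ⟨fun hcon => hne ((rotEquiv c).injective hcon), Or.inr (R_rot c hr)⟩

def rotIso (c : ZMod h) : ZT n h ≃g ZT n h :=
  { rotEquiv c with
    map_rel_iff' := by
      intro a b
      constructor
      · intro hab
        have h2 := adj_rot (-c) hab
        have e : ∀ x : ZTVert n h, rotEquiv (-c) (rotEquiv c x) = x := by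
          intro x; obtain ⟨k, i, j⟩ := x; simp [rotEquiv]
        rwa [e, e] at h2
      · exact fun hab => adj_rot c hab }

def flipEquiv : ZTVert n h ≃ ZTVert n h where
  toFun v := (v.1.rev, v.2.1.rev, -v.2.2)
  invFun v := (v.1.rev, v.2.1.rev, -v.2.2)
  left_inv v := by obtain ⟨k, i, j⟩ := v; simp
  right_inv v := by obtain ⟨k, i, j⟩ := v; simp

lemma R_flip {a b : ZTVert n h} (hr : R a b) : R (flipEquiv b) (flipEquiv a) := by
  obtain ⟨k, i, j⟩ := a; obtain ⟨k', i', j'⟩ := b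
  have hi : (i : ℕ) ≤ n := Nat.lt_succ_iff.mp i.isLt
  have hi' : (i' : ℕ) ≤ n := Nat.lt_succ_iff.mp i'.isLt
  unfold R at hr ⊢
  simp only [flipEquiv, Equiv.coe_fn_mk]
  rcases hr with ⟨h1, h2, h3, h4⟩ | ⟨h1, h2, h3, h4⟩ | ⟨h1, h2, h3, h4⟩ <;>
    dsimp only at h1 h2 h3 h4 ⊢
  · subst h1; subst h2
    exact Or.inl ⟨by decide, by decide, congrArg Fin.rev h3.symm, by rw [h4]⟩
  · subst h1; subst h2
    exact Or.inr (Or.inl ⟨by decide, by decide, congrArg Fin.rev h3.symm, by rw [h4]; ring⟩)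
  · subst h1; subst h2
    refine Or.inr (Or.inr ⟨by decide, by decide, ?_, by rw [h4]⟩)
    show (Fin.rev i : ℕ) = (Fin.rev i' : ℕ) + 1
    rw [Fin.val_rev, Fin.val_rev]
    omega

lemma adj_flip {a b : ZTVert n h} (hab : (ZT n h).Adj a b) :
    (ZT n h).Adj (flipEquiv a) (flipEquiv b) := by
  rw [ZT_adj] at hab ⊢
  obtain ⟨hne, hr | hr⟩ := hab
  · exact ⟨fun hcon => hne (flipEquiv.injective hcon), Or.inr (R_flip hr)⟩
  · exact ⟨fun hcon => hne (flipEquiv.injective hcon), Or.inl (R_flip hr)⟩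

lemma flip_flip (x : ZTVert n h) : flipEquiv (flipEquiv x) = x := by
  obtain ⟨k, i, j⟩ := x; simp [flipEquiv]

def flipIso : ZT n h ≃g ZT n h :=
  { flipEquiv with
    map_rel_iff' := by
      intro a b
      constructor
      · intro hab
        have h2 := adj_flip hab
        rwa [flip_flip, flip_flip] at h2
      · exact fun hab => adj_flip hab }

lemma fV_flip (v : ZTVert n h) : fV (flipEquiv v) = 2 * n + 1 - fV v := by
  obtain ⟨k, i, j⟩ := v
  have hk : (k : ℕ) < 2 := k.isLt
  have hi : (i : ℕ) ≤ n := Nat.lt_succ_iff.mp i.isLt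
  show 2 * (Fin.rev i : ℕ) + (Fin.rev k : ℕ) = 2 * n + 1 - (2 * (i : ℕ) + (k : ℕ))
  rw [Fin.val_rev, Fin.val_rev]
  omega

lemma fV_comp {u v : ZTVert n h} (hf : fV u = fV v) : u.1 = v.1 ∧ u.2.1 = v.2.1 := by
  have h1 : (u.1 : ℕ) < 2 := u.1.isLt
  have h2 : (v.1 : ℕ) < 2 := v.1.isLt
  unfold fV at hf
  constructor <;> (ext; omega)

lemma exists_iso_of_mV_eq {u v : ZTVert n h} (huv : mV u = mV v) :
    ∃ α : ZT n h ≃g ZT n h, α u = v := by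
  have h1 := fV_le u; have h2 := fV_le v
  have key : fV u = fV v ∨ fV v = 2 * n + 1 - fV u := by unfold mV at huv; omega
  rcases key with key | key
  · obtain ⟨e1, e2⟩ := fV_comp key
    refine ⟨rotIso (v.2.2 - u.2.2), ?_⟩
    show ((u.1, u.2.1, u.2.2 + (v.2.2 - u.2.2)) : ZTVert n h) = v
    rw [Prod.ext_iff, Prod.ext_iff]
    exact ⟨e1, e2, by ring⟩
  · have e0 : fV (flipEquiv u) = fV v := by rw [fV_flip]; omega
    obtain ⟨e1, e2⟩ := fV_comp e0
    refine ⟨flipIso.trans (rotIso (v.2.2 + u.2.2)), ?_⟩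
    rw [RelIso.trans_apply]
    show (((flipEquiv u).1, (flipEquiv u).2.1, (flipEquiv u).2.2 + (v.2.2 + u.2.2)) :
      ZTVert n h) = v
    rw [Prod.ext_iff, Prod.ext_iff]
    refine ⟨e1, e2, ?_⟩
    show -u.2.2 + (v.2.2 + u.2.2) = v.2.2
    ring

lemma hasTriple_iso (α : ZT n h ≃g ZT n h) {v : ZTVert n h} (hv : hasTriple v) :
    hasTriple (α v) := by
  obtain ⟨w1, w2, w3, a1, a2, a3, d12, d13, d23⟩ := hv
  exact ⟨α w1, α w2, α w3, α.map_rel_iff.mpr a1, α.map_rel_iff.mpr a2, α.map_rel_iff.mpr a3,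
    fun hc => d12 (α.injective hc), fun hc => d13 (α.injective hc),
    fun hc => d23 (α.injective hc)⟩

lemma exists_down {v : ZTVert n h} {μ : ℕ} (hv : mV v = μ + 1) :
    ∃ w, (ZT n h).Adj v w ∧ mV w = μ := by
  obtain ⟨k, i, j⟩ := v
  have hk : (k : ℕ) < 2 := k.isLt
  have hi : (i : ℕ) ≤ n := Nat.lt_succ_iff.mp i.isLt
  have hfv : fV ((k, i, j) : ZTVert n h) = 2 * (i : ℕ) + (k : ℕ) := rfl
  rcases le_or_gt (fV ((k, i, j) : ZTVert n h)) n with hle | hgt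
  · -- going up
    have hμ : 2 * (i : ℕ) + (k : ℕ) = μ + 1 := by
      have := hv; unfold mV at this; omega
    fin_cases k
    · -- k = 0, i ≥ 1, w = (1, i-1, j)
      simp only [Fin.val_zero] at hμ hle hfv
      have hi1 : 1 ≤ (i : ℕ) := by omega
      refine ⟨(1, ⟨(i : ℕ) - 1, by omega⟩, j), ?_, ?_⟩
      · rw [ZT_adj]
        refine ⟨?_, Or.inr (Or.inr (Or.inr ⟨rfl, rfl, ?_, rfl⟩))⟩
        · intro hcon
          exact absurd (congrArg (fun x => (x.1 : ℕ)) hcon) (by simp)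
        · show (i : ℕ) = ((i : ℕ) - 1) + 1
          omega
      · show min (2 * ((i : ℕ) - 1) + 1) (2 * n + 1 - (2 * ((i : ℕ) - 1) + 1)) = μ
        omega
    · -- k = 1, w = (0, i, j)
      simp only [Fin.val_one] at hμ hle hfv
      refine ⟨(0, i, j), ?_, ?_⟩
      · rw [ZT_adj]
        refine ⟨?_, Or.inr (Or.inl ⟨rfl, rfl, rfl, rfl⟩)⟩
        intro hcon
        exact absurd (congrArg (fun x => (x.1 : ℕ)) hcon) (by simp)
      · show min (2 * (i : ℕ) + 0) (2 * n + 1 - (2 * (i : ℕ) + 0)) = μ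
        omega
  · -- going down
    have hμ : 2 * n + 1 - (2 * (i : ℕ) + (k : ℕ)) = μ + 1 := by
      have := hv; have := fV_le ((k, i, j) : ZTVert n h); unfold mV at *; omega
    fin_cases k
    · -- k = 0, w = (1, i, j)
      simp only [Fin.val_zero] at hμ hgt hfv
      refine ⟨(1, i, j), ?_, ?_⟩
      · rw [ZT_adj]
        refine ⟨?_, Or.inl (Or.inl ⟨rfl, rfl, rfl, rfl⟩)⟩
        intro hcon
        exact absurd (congrArg (fun x => (x.1 : ℕ)) hcon) (by simp)
      · show min (2 * (i : ℕ) + 1) (2 * n + 1 - (2 * (i : ℕ) + 1)) = μ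
        omega
    · -- k = 1, w = (0, i+1, j)
      simp only [Fin.val_one] at hμ hgt hfv
      have hi1 : (i : ℕ) + 1 ≤ n := by omega
      refine ⟨(0, ⟨(i : ℕ) + 1, by omega⟩, j), ?_, ?_⟩
      · rw [ZT_adj]
        refine ⟨?_, Or.inl (Or.inr (Or.inr ⟨rfl, rfl, rfl, rfl⟩))⟩
        intro hcon
        exact absurd (congrArg (fun x => (x.1 : ℕ)) hcon) (by simp)
      · show min (2 * ((i : ℕ) + 1) + 0) (2 * n + 1 - (2 * ((i : ℕ) + 1) + 0)) = μ
        omega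

lemma iso_mV (hh : 2 ≤ h) :
    ∀ μ (α : ZT n h ≃g ZT n h) (v : ZTVert n h), mV v = μ → mV (α v) = μ := by
  intro μ
  induction μ using Nat.strong_induction_on with
  | _ μ IH =>
    intro α v hv
    match μ, hv with
    | 0, hv =>
      by_contra hne
      exact no_triple_of_mV_zero hv
        (by
          have h3 := hasTriple_iso α.symm (triple_of_mV_pos hh hne)
          rwa [α.symm_apply_apply] at h3)
    | (t+1), hv =>
      have hle : t + 1 ≤ n := hv ▸ mV_le v
      obtain ⟨w, hadj, hw⟩ := exists_down hv
      have hw' : mV (α w) = t := IH t (by omega) α w hw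
      have hadj' : (ZT n h).Adj (α v) (α w) := α.map_rel_iff.mpr hadj
      rcases adj_mV hadj' with h1 | h1 | ⟨h1, h2⟩
      · omega
      · exfalso
        have h3 := IH (mV (α v)) (by omega) α.symm (α v) rfl
        rw [α.symm_apply_apply] at h3
        omega
      · omega
lemma iso_mV_eq (hh : 2 ≤ h) (α : ZT n h ≃g ZT n h) (v : ZTVert n h) :
    mV (α v) = mV v :=
  iso_mV hh (mV v) α v rfl


lemma orbit_eq (hh : 2 ≤ h) (u : ZTVert n h) :
    graphOrbit (ZT n h) u = {v | mV v = mV u} := by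
  ext v
  constructor
  · rintro ⟨α, rfl⟩
    exact iso_mV_eq hh α u
  · intro hv
    exact exists_iso_of_mV_eq (show mV u = mV v from hv.symm)

lemma level_even (hodd : Odd n) {i : ℕ} (hi : i ≤ (n - 1) / 2) :
    {v : ZTVert n h | mV v = 2 * i} = ZTVset n h 0 i ∪ ZTVset n h 1 (n - i) := by
  obtain ⟨s, hs⟩ := hodd
  ext ⟨k, i', j⟩
  have hk : (k : ℕ) < 2 := k.isLt
  have hi' : (i' : ℕ) ≤ n := Nat.lt_succ_iff.mp i'.isLt
  simp only [Set.mem_setOf_eq, Set.mem_union, ZTVset]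
  show min (2 * (i' : ℕ) + (k : ℕ)) (2 * n + 1 - (2 * (i' : ℕ) + (k : ℕ))) = _ ↔ _
  rw [Fin.ext_iff, Fin.ext_iff]
  simp only [Fin.val_zero, Fin.val_one]
  omega

lemma level_odd (hodd : Odd n) {i : ℕ} (hi : i ≤ (n - 1) / 2) :
    {v : ZTVert n h | mV v = 2 * i + 1} = ZTVset n h 1 i ∪ ZTVset n h 0 (n - i) := by
  obtain ⟨s, hs⟩ := hodd
  ext ⟨k, i', j⟩
  have hk : (k : ℕ) < 2 := k.isLt
  have hi' : (i' : ℕ) ≤ n := Nat.lt_succ_iff.mp i'.isLt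
  simp only [Set.mem_setOf_eq, Set.mem_union, ZTVset]
  show min (2 * (i' : ℕ) + (k : ℕ)) (2 * n + 1 - (2 * (i' : ℕ) + (k : ℕ))) = _ ↔ _
  rw [Fin.ext_iff, Fin.ext_iff]
  simp only [Fin.val_zero, Fin.val_one]
  omega

end ZTaux

open ZTaux

/-- For odd `n ≥ 1` and `h ≥ 2`, the orbits of the natural action of
`Aut(ZT(n,h))` on `V(ZT(n,h))` are exactly the sets `O⁰ᵢ = V⁰ᵢ ∪ V¹_{n-i}` and
`O¹ᵢ = V¹ᵢ ∪ V⁰_{n-i}` for `i ∈ {0, …, (n-1)/2}`. -/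
theorem orbits_ZT_odd (n h : ℕ) (hn : 1 ≤ n) (hodd : Odd n) (hh : 2 ≤ h) :
    {S : Set (ZTVert n h) | ∃ u, S = graphOrbit (ZT n h) u} =
      {S : Set (ZTVert n h) | ∃ i ≤ (n - 1) / 2,
        S = ZTVset n h 0 i ∪ ZTVset n h 1 (n - i) ∨
        S = ZTVset n h 1 i ∪ ZTVset n h 0 (n - i)} := by
  have hodd' := hodd
  obtain ⟨s, hs⟩ := hodd'
  ext S
  simp only [Set.mem_setOf_eq]
  constructor
  · rintro ⟨u, rfl⟩
    have hle : mV u ≤ n := mV_le u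
    rcases Nat.even_or_odd (mV u) with ⟨i, hig⟩ | ⟨i, hig⟩
    · refine ⟨i, by omega, Or.inl ?_⟩
      rw [orbit_eq hh u, show mV u = 2 * i by omega]
      exact level_even hodd (by omega)
    · refine ⟨i, by omega, Or.inr ?_⟩
      rw [orbit_eq hh u, show mV u = 2 * i + 1 by omega]
      exact level_odd hodd (by omega)
  · rintro ⟨i, hi, hS | hS⟩ <;> subst hS
    · refine ⟨((0 : Fin 2), ⟨i, by omega⟩, (0 : ZMod h)), ?_⟩
      have hm : mV (((0 : Fin 2), (⟨i, by omega⟩ : Fin (n + 1)), (0 : ZMod h)) : ZTVert n h)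
          = 2 * i := by
        show min (2 * i + 0) (2 * n + 1 - (2 * i + 0)) = 2 * i
        omega
      rw [orbit_eq hh, hm]
      exact (level_even hodd hi).symm
    · refine ⟨((1 : Fin 2), ⟨i, by omega⟩, (0 : ZMod h)), ?_⟩
      have hm : mV (((1 : Fin 2), (⟨i, by omega⟩ : Fin (n + 1)), (0 : ZMod h)) : ZTVert n h)
          = 2 * i + 1 := by
        show min (2 * i + 1) (2 * n + 1 - (2 * i + 1)) = 2 * i + 1
        omega
      rw [orbit_eq hh, hm]
      exact (level_odd hodd hi).symm
end

section
/- Let n ≥ 2 be even and h ≥ 2. Then the orbits of the natural action of Aut(ZT(n,h)) on V(ZT(n,h)) are exactly the sets O^0_i = V^0_i ∪ V^1_{n−i} for i ∈ {0, …, (n−2)/2}, O^1_i = V^1_i ∪ V^0_{n−i} for i ∈ {0, …, (n−2)/2}, and O_{n/2} = V^0_{n/2} ∪ V^1_{n/2}. -/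
open SimpleGraph

namespace ZTP
lemma fin2_cases (a : Fin 2) : a = 0 ∨ a = 1 := by fin_cases a <;> simp
variable (n h : ℕ)
def Rr (p q : Fin (n+1) × ZMod h) : Prop :=
  ((p.1 : ℕ) = (q.1 : ℕ) ∧ (p.2 = q.2 ∨ p.2 = q.2 + 1)) ∨
  ((p.1 : ℕ) = (q.1 : ℕ) + 1 ∧ p.2 = q.2)
lemma adj_iff (a b : ZTVert n h) :
    (ZT n h).Adj a b ↔
      (a.1 = 0 ∧ b.1 = 1 ∧ Rr n h a.2 b.2) ∨ (a.1 = 1 ∧ b.1 = 0 ∧ Rr n h b.2 a.2) := by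
  obtain ⟨k, i, j⟩ := a
  obtain ⟨k', i', j'⟩ := b
  rw [ZT, fromRel_adj]
  fin_cases k <;> fin_cases k' <;>
    simp [Rr, Fin.ext_iff, Prod.ext_iff] <;> tauto

def fv (k : Fin 2) (i : ℕ) : ℕ :=
  if k = 0 then min (2*i) (2*(n-i)+1) else min (2*i+1) (2*(n-i))

def fZ (v : ZTVert n h) : ℕ := fv n v.1 (v.2.1 : ℕ)

lemma lipschitz {a b : ZTVert n h} (hab : (ZT n h).Adj a b) :
    fZ n h a ≤ fZ n h b + 1 := by
  have ha := a.2.1.is_le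
  have hb := b.2.1.is_le
  rw [adj_iff] at hab
  rcases hab with ⟨h1, h2, hR⟩ | ⟨h1, h2, hR⟩ <;>
    rcases hR with ⟨hi, _⟩ | ⟨hi, _⟩ <;>
    simp [fZ, fv, h1, h2] <;> omega

lemma exists_lower {v : ZTVert n h} (hv : 1 ≤ fZ n h v) :
    ∃ w, (ZT n h).Adj v w ∧ fZ n h w + 1 = fZ n h v := by
  obtain ⟨k, i, j⟩ := v
  have hi := i.is_le
  rcases fin2_cases k with rfl | rfl
  · have hv' : 1 ≤ min (2*(i:ℕ)) (2*(n-(i:ℕ))+1) := hv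
    have hi1 : 1 ≤ (i:ℕ) := by omega
    by_cases hc : 2*(i:ℕ) ≤ 2*(n-(i:ℕ))+1
    · refine ⟨(1, ⟨(i:ℕ)-1, by omega⟩, j), ?_, ?_⟩
      · rw [adj_iff]
        exact Or.inl ⟨rfl, rfl, Or.inr ⟨by simp; omega, rfl⟩⟩
      · show min (2*((i:ℕ)-1)+1) (2*(n-((i:ℕ)-1))) + 1 = min (2*(i:ℕ)) (2*(n-(i:ℕ))+1)
        omega
    · refine ⟨(1, i, j), ?_, ?_⟩
      · rw [adj_iff]
        exact Or.inl ⟨rfl, rfl, Or.inl ⟨rfl, Or.inl rfl⟩⟩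
      · show min (2*(i:ℕ)+1) (2*(n-(i:ℕ))) + 1 = min (2*(i:ℕ)) (2*(n-(i:ℕ))+1)
        omega
  · have hv' : 1 ≤ min (2*(i:ℕ)+1) (2*(n-(i:ℕ))) := hv
    have hi1 : (i:ℕ) < n := by omega
    by_cases hc : 2*(i:ℕ)+1 ≤ 2*(n-(i:ℕ))
    · refine ⟨(0, i, j), ?_, ?_⟩
      · rw [adj_iff]
        exact Or.inr ⟨rfl, rfl, Or.inl ⟨rfl, Or.inl rfl⟩⟩
      · show min (2*(i:ℕ)) (2*(n-(i:ℕ))+1) + 1 = min (2*(i:ℕ)+1) (2*(n-(i:ℕ)))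
        omega
    · refine ⟨(0, ⟨(i:ℕ)+1, by omega⟩, j), ?_, ?_⟩
      · rw [adj_iff]
        exact Or.inr ⟨rfl, rfl, Or.inr ⟨by simp, rfl⟩⟩
      · show min (2*((i:ℕ)+1)) (2*(n-((i:ℕ)+1))+1) + 1 = min (2*(i:ℕ)+1) (2*(n-(i:ℕ)))
        omega

lemma nb_boundary {v : ZTVert n h} (hv : fZ n h v = 0) :
    ((ZT n h).neighborSet v).ncard ≤ 2 := by
  obtain ⟨k, i, j⟩ := v
  have hi := i.is_le
  rcases fin2_cases k with rfl | rfl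
  · have hi0 : (i:ℕ) = 0 := by
      have : min (2*(i:ℕ)) (2*(n-(i:ℕ))+1) = 0 := hv
      omega
    have hsub : (ZT n h).neighborSet (0, i, j) ⊆ {((1:Fin 2), i, j), (1, i, j - 1)} := by
      intro w hw
      rw [mem_neighborSet, adj_iff] at hw
      obtain ⟨k', i', j'⟩ := w
      rcases hw with ⟨-, h2, hR⟩ | ⟨h1, -, -⟩
      · have h2' : k' = 1 := h2
        subst h2'
        rcases hR with ⟨hii, hj⟩ | ⟨hii, -⟩
        · have hii2 : (i:ℕ) = (i':ℕ) := hii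
          have hfix : i' = i := by apply Fin.ext; omega
          subst hfix
          rcases hj with hc | hc
          · have hc' : j = j' := hc
            exact Or.inl (by rw [← hc'])
          · have hc' : j = j' + 1 := hc
            exact Or.inr (by rw [show j' = j - 1 from by rw [hc']; ring]; rfl)
        · have hii2 : (i:ℕ) = (i':ℕ) + 1 := hii
          exact absurd hii2 (by omega)
      · have h1' : (0 : Fin 2) = 1 := h1
        exact absurd h1' (by decide)
    calc ((ZT n h).neighborSet (0, i, j)).ncard
        ≤ ({((1:Fin 2), i, j), (1, i, j - 1)} : Set (ZTVert n h)).ncard :=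
          Set.ncard_le_ncard hsub (Set.toFinite _)
      _ ≤ 2 := by
          refine le_trans (Set.ncard_insert_le _ _) ?_
          simp
  · have hi0 : (i:ℕ) = n := by
      have : min (2*(i:ℕ)+1) (2*(n-(i:ℕ))) = 0 := hv
      omega
    have hsub : (ZT n h).neighborSet (1, i, j) ⊆ {((0:Fin 2), i, j), (0, i, j + 1)} := by
      intro w hw
      rw [mem_neighborSet, adj_iff] at hw
      obtain ⟨k', i', j'⟩ := w
      rcases hw with ⟨h1, -, -⟩ | ⟨-, h2, hR⟩
      · have h1' : (1 : Fin 2) = 0 := h1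
        exact absurd h1' (by decide)
      · have h2' : k' = 0 := h2
        subst h2'
        have hii' := i'.is_le
        rcases hR with ⟨hii, hj⟩ | ⟨hii, -⟩
        · have hii2 : (i':ℕ) = (i:ℕ) := hii
          have hfix : i' = i := by apply Fin.ext; omega
          subst hfix
          rcases hj with hc | hc
          · have hc' : j' = j := hc
            exact Or.inl (by rw [hc'])
          · have hc' : j' = j + 1 := hc
            exact Or.inr (by rw [hc']; rfl)
        · have hii2 : (i':ℕ) = (i:ℕ) + 1 := hii
          exact absurd hii2 (by omega)
    calc ((ZT n h).neighborSet (1, i, j)).ncard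
        ≤ ({((0:Fin 2), i, j), (0, i, j + 1)} : Set (ZTVert n h)).ncard :=
          Set.ncard_le_ncard hsub (Set.toFinite _)
      _ ≤ 2 := by
          refine le_trans (Set.ncard_insert_le _ _) ?_
          simp

lemma nb_interior (hh : 2 ≤ h) {v : ZTVert n h} (hv : 1 ≤ fZ n h v) :
    3 ≤ ((ZT n h).neighborSet v).ncard := by
  haveI : NeZero h := ⟨by omega⟩
  haveI : Fact (1 < h) := ⟨by omega⟩
  have hone : (1 : ZMod h) ≠ 0 := one_ne_zero
  obtain ⟨k, i, j⟩ := v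
  have hi := i.is_le
  rcases fin2_cases k with rfl | rfl
  · have hi1 : 1 ≤ (i:ℕ) := by
      have : 1 ≤ min (2*(i:ℕ)) (2*(n-(i:ℕ))+1) := hv
      omega
    have hsub : ({((1:Fin 2), i, j), (1, i, j - 1), (1, ⟨(i:ℕ)-1, by omega⟩, j)} : Set (ZTVert n h))
        ⊆ (ZT n h).neighborSet (0, i, j) := by
      rintro w (rfl | rfl | rfl) <;> rw [mem_neighborSet, adj_iff]
      · exact Or.inl ⟨rfl, rfl, Or.inl ⟨rfl, Or.inl rfl⟩⟩
      · exact Or.inl ⟨rfl, rfl, Or.inl ⟨rfl, Or.inr (by show j = (j-1) + 1; ring)⟩⟩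
      · refine Or.inl ⟨rfl, rfl, Or.inr ⟨?_, rfl⟩⟩
        show (i:ℕ) = (i:ℕ) - 1 + 1
        omega
    have hcard : ({((1:Fin 2), i, j), (1, i, j - 1), (1, ⟨(i:ℕ)-1, by omega⟩, j)} : Set (ZTVert n h)).ncard = 3 := by
      rw [Set.ncard_eq_three]
      refine ⟨_, _, _, ?_, ?_, ?_, rfl⟩
      · intro hEq
        have hj : j = j - 1 := congrArg (fun x => x.2.2) hEq
        exact hone (by linear_combination hj)
      · intro hEq
        have hf : (i:ℕ) = (i:ℕ) - 1 := congrArg (fun x => (x.2.1 : ℕ)) hEq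
        omega
      · intro hEq
        have hf : (i:ℕ) = (i:ℕ) - 1 := congrArg (fun x => (x.2.1 : ℕ)) hEq
        omega
    calc (3:ℕ) = _ := hcard.symm
      _ ≤ _ := Set.ncard_le_ncard hsub (Set.toFinite _)
  · have hi1 : (i:ℕ) < n := by
      have : 1 ≤ min (2*(i:ℕ)+1) (2*(n-(i:ℕ))) := hv
      omega
    have hsub : ({((0:Fin 2), i, j), (0, i, j + 1), (0, ⟨(i:ℕ)+1, by omega⟩, j)} : Set (ZTVert n h))
        ⊆ (ZT n h).neighborSet (1, i, j) := by
      rintro w (rfl | rfl | rfl) <;> rw [mem_neighborSet, adj_iff]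
      · exact Or.inr ⟨rfl, rfl, Or.inl ⟨rfl, Or.inl rfl⟩⟩
      · exact Or.inr ⟨rfl, rfl, Or.inl ⟨rfl, Or.inr rfl⟩⟩
      · exact Or.inr ⟨rfl, rfl, Or.inr ⟨rfl, rfl⟩⟩
    have hcard : ({((0:Fin 2), i, j), (0, i, j + 1), (0, ⟨(i:ℕ)+1, by omega⟩, j)} : Set (ZTVert n h)).ncard = 3 := by
      rw [Set.ncard_eq_three]
      refine ⟨_, _, _, ?_, ?_, ?_, rfl⟩
      · intro hEq
        have hj : j = j + 1 := congrArg (fun x => x.2.2) hEq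
        exact hone (by linear_combination -hj)
      · intro hEq
        have hf : (i:ℕ) = (i:ℕ) + 1 := congrArg (fun x => (x.2.1 : ℕ)) hEq
        omega
      · intro hEq
        have hf : (i:ℕ) = (i:ℕ) + 1 := congrArg (fun x => (x.2.1 : ℕ)) hEq
        omega
    calc (3:ℕ) = _ := hcard.symm
      _ ≤ _ := Set.ncard_le_ncard hsub (Set.toFinite _)

lemma fZ_zero_iff (hh : 2 ≤ h) (v : ZTVert n h) :
    fZ n h v = 0 ↔ ((ZT n h).neighborSet v).ncard ≤ 2 := by
  constructor
  · exact nb_boundary n h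
  · intro hc
    by_contra h0
    have := nb_interior n h hh (v := v) (by omega)
    omega

lemma ncard_nbhd (α : ZT n h ≃g ZT n h) (v : ZTVert n h) :
    ((ZT n h).neighborSet (α v)).ncard = ((ZT n h).neighborSet v).ncard := by
  rw [← Nat.card_coe_set_eq, ← Nat.card_coe_set_eq]
  exact (Nat.card_congr (α.mapNeighborSet v)).symm

lemma fZ_le_invariant (hh : 2 ≤ h) :
    ∀ m (α : ZT n h ≃g ZT n h) (v : ZTVert n h), fZ n h v ≤ m → fZ n h (α v) ≤ m := by
  intro m
  induction m with
  | zero =>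
    intro α v hv
    rw [Nat.le_zero] at hv ⊢
    rw [fZ_zero_iff n h hh] at hv ⊢
    rwa [ncard_nbhd]
  | succ m ih =>
    intro α v hv
    rcases le_or_gt (fZ n h v) m with hle | hlt
    · exact le_trans (ih α v hle) (Nat.le_succ m)
    · obtain ⟨w, hadj, hw⟩ := exists_lower n h (v := v) (by omega)
      have h1 : fZ n h (α w) ≤ m := ih α w (by omega)
      have h2 : (ZT n h).Adj (α v) (α w) := α.map_rel_iff.mpr hadj
      have h3 := lipschitz n h h2
      omega

lemma fZ_invariant (hh : 2 ≤ h) (α : ZT n h ≃g ZT n h) (v : ZTVert n h) :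
    fZ n h (α v) = fZ n h v := by
  have h1 := fZ_le_invariant n h hh (fZ n h v) α v le_rfl
  have h2 := fZ_le_invariant n h hh (fZ n h (α v)) α.symm (α v) le_rfl
  rw [RelIso.symm_apply_apply] at h2
  omega

def rotE (t : ZMod h) : ZTVert n h ≃ ZTVert n h where
  toFun v := (v.1, v.2.1, v.2.2 + t)
  invFun v := (v.1, v.2.1, v.2.2 - t)
  left_inv v := by obtain ⟨k, i, j⟩ := v; simp
  right_inv v := by obtain ⟨k, i, j⟩ := v; simp

lemma Rr_shift (t : ZMod h) (p q : Fin (n+1) × ZMod h) :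
    Rr n h (p.1, p.2 + t) (q.1, q.2 + t) ↔ Rr n h p q := by
  unfold Rr
  dsimp only
  constructor
  · rintro (⟨h1, h2 | h2⟩ | ⟨h1, h2⟩)
    · exact Or.inl ⟨h1, Or.inl (by linear_combination h2)⟩
    · exact Or.inl ⟨h1, Or.inr (by linear_combination h2)⟩
    · exact Or.inr ⟨h1, by linear_combination h2⟩
  · rintro (⟨h1, h2 | h2⟩ | ⟨h1, h2⟩)
    · exact Or.inl ⟨h1, Or.inl (by linear_combination h2)⟩
    · exact Or.inl ⟨h1, Or.inr (by linear_combination h2)⟩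
    · exact Or.inr ⟨h1, by linear_combination h2⟩

def rotIso (t : ZMod h) : ZT n h ≃g ZT n h :=
  { rotE n h t with
    map_rel_iff' := by
      intro a b
      show (ZT n h).Adj (a.1, a.2.1, a.2.2 + t) (b.1, b.2.1, b.2.2 + t) ↔ (ZT n h).Adj a b
      rw [adj_iff, adj_iff]
      constructor <;>
        · rintro (⟨h1, h2, hR⟩ | ⟨h1, h2, hR⟩)
          · exact Or.inl ⟨h1, h2, by
              first
              | exact (Rr_shift n h t a.2 b.2).mp hR
              | exact (Rr_shift n h t a.2 b.2).mpr hR⟩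
          · exact Or.inr ⟨h1, h2, by
              first
              | exact (Rr_shift n h t b.2 a.2).mp hR
              | exact (Rr_shift n h t b.2 a.2).mpr hR⟩ }

def sFun (v : ZTVert n h) : ZTVert n h :=
  if v.1 = 0 then (1, ⟨n - (v.2.1:ℕ), by omega⟩, ((v.2.1:ℕ) : ZMod h) + v.2.2)
  else (0, ⟨n - (v.2.1:ℕ), by omega⟩, ((v.2.1:ℕ) : ZMod h) + 1 + v.2.2)

lemma sFun_zero (i : Fin (n+1)) (j : ZMod h) :
    sFun n h (0, i, j) = (1, ⟨n - (i:ℕ), by omega⟩, ((i:ℕ) : ZMod h) + j) := by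
  simp [sFun]

lemma sFun_one (i : Fin (n+1)) (j : ZMod h) :
    sFun n h (1, i, j) = (0, ⟨n - (i:ℕ), by omega⟩, ((i:ℕ) : ZMod h) + 1 + j) := by
  rw [sFun, if_neg (show ¬((1:Fin 2), i, j).1 = 0 by simp)]

lemma sFun_rot (t : ZMod h) (v : ZTVert n h) :
    sFun n h (rotE n h t v) = rotE n h t (sFun n h v) := by
  obtain ⟨k, i, j⟩ := v
  rcases fin2_cases k with rfl | rfl
  · show sFun n h (0, i, j + t) = rotE n h t (sFun n h (0, i, j))
    rw [sFun_zero, sFun_zero]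
    refine Prod.ext rfl (Prod.ext rfl ?_)
    show ((i:ℕ) : ZMod h) + (j + t) = ((i:ℕ) : ZMod h) + j + t
    ring
  · show sFun n h (1, i, j + t) = rotE n h t (sFun n h (1, i, j))
    rw [sFun_one, sFun_one]
    refine Prod.ext rfl (Prod.ext rfl ?_)
    show ((i:ℕ) : ZMod h) + 1 + (j + t) = ((i:ℕ) : ZMod h) + 1 + j + t
    ring

lemma sFun_sFun (v : ZTVert n h) :
    sFun n h (sFun n h v) = rotE n h ((n : ZMod h) + 1) v := by
  obtain ⟨k, i, j⟩ := v
  have hi := i.is_le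
  rcases fin2_cases k with rfl | rfl
  · rw [sFun_zero, sFun_one]
    show ((0:Fin 2), _, _) = ((0:Fin 2), i, j + ((n : ZMod h) + 1))
    refine congrArg _ (Prod.ext ?_ ?_)
    · apply Fin.ext
      show n - (n - (i:ℕ)) = (i:ℕ)
      omega
    · show ((n - (i:ℕ) : ℕ) : ZMod h) + 1 + (((i:ℕ) : ZMod h) + j) = j + ((n : ZMod h) + 1)
      rw [Nat.cast_sub hi]
      ring
  · rw [sFun_one, sFun_zero]
    show ((1:Fin 2), _, _) = ((1:Fin 2), i, j + ((n : ZMod h) + 1))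
    refine congrArg _ (Prod.ext ?_ ?_)
    · apply Fin.ext
      show n - (n - (i:ℕ)) = (i:ℕ)
      omega
    · show ((n - (i:ℕ) : ℕ) : ZMod h) + (((i:ℕ) : ZMod h) + 1 + j) = j + ((n : ZMod h) + 1)
      rw [Nat.cast_sub hi]
      ring

lemma sFun_adj {a b : ZTVert n h} (hab : (ZT n h).Adj a b) :
    (ZT n h).Adj (sFun n h a) (sFun n h b) := by
  obtain ⟨k, i, j⟩ := a
  obtain ⟨k', i', j'⟩ := b
  have hi := i.is_le
  have hi' := i'.is_le
  rw [adj_iff] at hab ⊢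
  rcases hab with ⟨h1, h2, hR⟩ | ⟨h1, h2, hR⟩
  · -- a type 0, b type 1
    have hk : k = 0 := h1
    have hk' : k' = 1 := h2
    subst hk hk'
    rw [sFun_zero, sFun_one]
    refine Or.inr ⟨rfl, rfl, ?_⟩
    rcases hR with ⟨hii, hj⟩ | ⟨hii, hj⟩
    · have hii2 : (i:ℕ) = (i':ℕ) := hii
      have hic : ((i:ℕ) : ZMod h) = ((i':ℕ) : ZMod h) := by rw [hii2]
      refine Or.inl ⟨by show n - (i':ℕ) = n - (i:ℕ); omega, ?_⟩
      rcases hj with hc | hc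
      · have hc' : j = j' := hc
        exact Or.inr (by show _ = ((i:ℕ) : ZMod h) + j + 1; rw [hc', hic]; try ring)
      · have hc' : j = j' + 1 := hc
        exact Or.inl (by show _ = ((i:ℕ) : ZMod h) + j; rw [hc', hic]; try ring)
    · have hii2 : (i:ℕ) = (i':ℕ) + 1 := hii
      have hic : ((i:ℕ) : ZMod h) = ((i':ℕ) : ZMod h) + 1 := by
        rw [hii2]; push_cast; ring
      have hc' : j = j' := hj
      refine Or.inr ⟨by show n - (i':ℕ) = n - (i:ℕ) + 1; omega, ?_⟩
      show _ = ((i:ℕ) : ZMod h) + j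
      rw [hc', hic]; try ring
  · -- a type 1, b type 0
    have hk : k = 1 := h1
    have hk' : k' = 0 := h2
    subst hk hk'
    rw [sFun_one, sFun_zero]
    refine Or.inl ⟨rfl, rfl, ?_⟩
    rcases hR with ⟨hii, hj⟩ | ⟨hii, hj⟩
    · have hii2 : (i':ℕ) = (i:ℕ) := hii
      have hic : ((i':ℕ) : ZMod h) = ((i:ℕ) : ZMod h) := by rw [hii2]
      refine Or.inl ⟨by show n - (i:ℕ) = n - (i':ℕ); omega, ?_⟩
      rcases hj with hc | hc
      · have hc' : j' = j := hc
        exact Or.inr (by show _ = ((i':ℕ) : ZMod h) + j' + 1; rw [hc', hic]; try ring)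
      · have hc' : j' = j + 1 := hc
        exact Or.inl (by show _ = ((i':ℕ) : ZMod h) + j'; rw [hc', hic]; try ring)
    · have hii2 : (i':ℕ) = (i:ℕ) + 1 := hii
      have hic : ((i':ℕ) : ZMod h) = ((i:ℕ) : ZMod h) + 1 := by
        rw [hii2]; push_cast; ring
      have hc' : j' = j := hj
      refine Or.inr ⟨by show n - (i:ℕ) = n - (i':ℕ) + 1; omega, ?_⟩
      show _ = ((i':ℕ) : ZMod h) + j'
      rw [hc', hic]; try ring

def sEquiv : ZTVert n h ≃ ZTVert n h where
  toFun := sFun n h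
  invFun v := rotE n h (-((n : ZMod h) + 1)) (sFun n h v)
  left_inv v := by
    show rotE n h (-((n : ZMod h) + 1)) (sFun n h (sFun n h v)) = v
    rw [sFun_sFun]
    show rotE n h _ (rotE n h _ v) = v
    obtain ⟨k, i, j⟩ := v
    show (k, i, j + ((n : ZMod h) + 1) + -((n : ZMod h) + 1)) = (k, i, j)
    rw [add_neg_cancel_right]
  right_inv v := by
    show sFun n h (rotE n h (-((n : ZMod h) + 1)) (sFun n h v)) = v
    rw [sFun_rot, sFun_sFun]
    show rotE n h _ (rotE n h _ v) = v
    obtain ⟨k, i, j⟩ := v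
    show (k, i, j + ((n : ZMod h) + 1) + -((n : ZMod h) + 1)) = (k, i, j)
    rw [add_neg_cancel_right]

def sIso : ZT n h ≃g ZT n h :=
  { sEquiv n h with
    map_rel_iff' := by
      intro a b
      show (ZT n h).Adj (sFun n h a) (sFun n h b) ↔ (ZT n h).Adj a b
      constructor
      · intro hadj
        have h2 := sFun_adj n h hadj
        rw [sFun_sFun, sFun_sFun] at h2
        exact (rotIso n h ((n : ZMod h) + 1)).map_rel_iff.mp h2
      · exact sFun_adj n h }

lemma fv_eq_iff (he : Even n) (k k' : Fin 2) (i i' : ℕ) (hi : i ≤ n) (hi' : i' ≤ n) :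
    fv n k i = fv n k' i' ↔ ((k = k' ∧ i = i') ∨ (k ≠ k' ∧ i + i' = n)) := by
  obtain ⟨m, rfl⟩ := he
  fin_cases k <;> fin_cases k' <;> simp [fv] <;> omega

lemma fZ_mk (k : Fin 2) (i : Fin (n+1)) (j : ZMod h) : fZ n h (k, i, j) = fv n k (i:ℕ) := rfl

lemma orbit_eq (hh : 2 ≤ h) (he : Even n) (u : ZTVert n h) :
    graphOrbit (ZT n h) u = {v | fZ n h v = fZ n h u} := by
  ext v
  constructor
  · rintro ⟨α, rfl⟩
    exact fZ_invariant n h hh α u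
  · intro hv
    have hv' : fv n v.1 (v.2.1:ℕ) = fv n u.1 (u.2.1:ℕ) := hv
    rw [fv_eq_iff n he _ _ _ _ v.2.1.is_le u.2.1.is_le] at hv'
    rcases hv' with ⟨hk, hi⟩ | ⟨hk, hi⟩
    · refine ⟨rotIso n h (v.2.2 - u.2.2), ?_⟩
      show (u.1, u.2.1, u.2.2 + (v.2.2 - u.2.2)) = v
      rw [add_sub_cancel]
      refine Prod.ext hk.symm (Prod.ext (Fin.ext hi.symm) rfl)
    · obtain ⟨ku, iu, ju⟩ := u
      obtain ⟨kv, iv, jv⟩ := v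
      have hk' : kv ≠ ku := hk
      have hi' : (iv:ℕ) + (iu:ℕ) = n := hi
      have hiu := iu.is_le
      rcases fin2_cases ku with rfl | rfl
      · have hkv : kv = 1 := by
          rcases fin2_cases kv with rfl | rfl
          · exact absurd rfl hk'
          · rfl
        subst hkv
        refine ⟨(sIso n h).trans (rotIso n h (jv - (((iu:ℕ):ZMod h) + ju))), ?_⟩
        show rotIso n h _ (sFun n h (0, iu, ju)) = ((1:Fin 2), iv, jv)
        rw [sFun_zero]
        show ((1:Fin 2), (⟨n - (iu:ℕ), by omega⟩ : Fin (n+1)),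
            ((iu:ℕ):ZMod h) + ju + (jv - (((iu:ℕ):ZMod h) + ju))) = ((1:Fin 2), iv, jv)
        rw [add_sub_cancel]
        exact Prod.ext rfl (Prod.ext (Fin.ext (by show n - (iu:ℕ) = (iv:ℕ); omega)) rfl)
      · have hkv : kv = 0 := by
          rcases fin2_cases kv with rfl | rfl
          · rfl
          · exact absurd rfl hk'
        subst hkv
        refine ⟨(sIso n h).trans (rotIso n h (jv - (((iu:ℕ):ZMod h) + 1 + ju))), ?_⟩
        show rotIso n h _ (sFun n h (1, iu, ju)) = ((0:Fin 2), iv, jv)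
        rw [sFun_one]
        show ((0:Fin 2), (⟨n - (iu:ℕ), by omega⟩ : Fin (n+1)),
            ((iu:ℕ):ZMod h) + 1 + ju + (jv - (((iu:ℕ):ZMod h) + 1 + ju))) = ((0:Fin 2), iv, jv)
        rw [add_sub_cancel]
        exact Prod.ext rfl (Prod.ext (Fin.ext (by show n - (iu:ℕ) = (iv:ℕ); omega)) rfl)

lemma level_eq (he : Even n) (k : Fin 2) (i : ℕ) (hi : i ≤ n) :
    {v : ZTVert n h | fZ n h v = fv n k i} = ZTVset n h k i ∪ ZTVset n h (1-k) (n-i) := by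
  ext v
  have hvle := v.2.1.is_le
  simp only [Set.mem_setOf_eq, Set.mem_union, ZTVset]
  rw [show fZ n h v = fv n v.1 (v.2.1:ℕ) from rfl,
    fv_eq_iff n he _ _ _ _ v.2.1.is_le hi]
  constructor
  · rintro (⟨hk, hiv⟩ | ⟨hk, hiv⟩)
    · exact Or.inl ⟨hk, hiv⟩
    · refine Or.inr ⟨?_, by omega⟩
      rcases fin2_cases k with rfl | rfl <;> rcases fin2_cases v.1 with h1 | h1 <;>
        simp_all
  · rintro (⟨hk, hiv⟩ | ⟨hk, hiv⟩)
    · exact Or.inl ⟨hk, hiv⟩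
    · refine Or.inr ⟨?_, by omega⟩
      rcases fin2_cases k with rfl | rfl <;> rcases fin2_cases v.1 with h1 | h1 <;>
        simp_all

end ZTP

/-- For even `n ≥ 2` and `h ≥ 2`, the orbits of the natural action of
`Aut(ZT(n,h))` on `V(ZT(n,h))` are exactly the sets `O⁰ᵢ = V⁰ᵢ ∪ V¹_{n-i}` and
`O¹ᵢ = V¹ᵢ ∪ V⁰_{n-i}` for `i ∈ {0, …, (n-2)/2}`, together with
`O_{n/2} = V⁰_{n/2} ∪ V¹_{n/2}`. -/
theorem orbits_ZT_even (n h : ℕ) (hn : 2 ≤ n) (heven : Even n) (hh : 2 ≤ h) :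
    {S : Set (ZTVert n h) | ∃ u, S = graphOrbit (ZT n h) u} =
      {S : Set (ZTVert n h) | ∃ i ≤ (n - 2) / 2,
        S = ZTVset n h 0 i ∪ ZTVset n h 1 (n - i) ∨
        S = ZTVset n h 1 i ∪ ZTVset n h 0 (n - i)} ∪
      {ZTVset n h 0 (n / 2) ∪ ZTVset n h 1 (n / 2)} := by
  have h10 : (1 - 0 : Fin 2) = 1 := by decide
  have h11 : (1 - 1 : Fin 2) = 0 := by decide
  obtain ⟨m, hm⟩ := heven
  have heven' : Even n := ⟨m, hm⟩
  ext S
  simp only [Set.mem_setOf_eq, Set.mem_union, Set.mem_singleton_iff]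
  constructor
  · rintro ⟨u, rfl⟩
    rw [ZTP.orbit_eq n h hh heven' u]
    obtain ⟨k, i, j⟩ := u
    have hi := i.is_le
    rw [show ZTP.fZ n h (k, i, j) = ZTP.fv n k (i:ℕ) from rfl,
      ZTP.level_eq n h heven' k (i:ℕ) hi]
    rcases ZTP.fin2_cases k with rfl | rfl
    · rw [h10]
      rcases lt_trichotomy (i:ℕ) (n/2) with hc | hc | hc
      · exact Or.inl ⟨(i:ℕ), by omega, Or.inl rfl⟩
      · refine Or.inr ?_
        rw [hc, show n - n/2 = n/2 from by omega]
      · refine Or.inl ⟨n - (i:ℕ), by omega, Or.inr ?_⟩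
        rw [show n - (n - (i:ℕ)) = (i:ℕ) from by omega]
        exact Set.union_comm _ _
    · rw [h11]
      rcases lt_trichotomy (i:ℕ) (n/2) with hc | hc | hc
      · exact Or.inl ⟨(i:ℕ), by omega, Or.inr rfl⟩
      · rw [hc, show n - n/2 = n/2 from by omega]
        exact Or.inr (Set.union_comm _ _)
      · refine Or.inl ⟨n - (i:ℕ), by omega, Or.inl ?_⟩
        rw [show n - (n - (i:ℕ)) = (i:ℕ) from by omega]
        exact Set.union_comm _ _
  · rintro (⟨i, hile, hS | hS⟩ | hS)
    · refine ⟨(0, ⟨i, by omega⟩, 0), ?_⟩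
      rw [ZTP.orbit_eq n h hh heven',
        show ZTP.fZ n h ((0 : Fin 2), (⟨i, by omega⟩ : Fin (n+1)), (0 : ZMod h)) = ZTP.fv n 0 i from rfl,
        ZTP.level_eq n h heven' 0 i (by omega), h10]
      exact hS
    · refine ⟨(1, ⟨i, by omega⟩, 0), ?_⟩
      rw [ZTP.orbit_eq n h hh heven',
        show ZTP.fZ n h ((1 : Fin 2), (⟨i, by omega⟩ : Fin (n+1)), (0 : ZMod h)) = ZTP.fv n 1 i from rfl,
        ZTP.level_eq n h heven' 1 i (by omega), h11]
      exact hS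
    · refine ⟨(0, ⟨n/2, by omega⟩, 0), ?_⟩
      rw [ZTP.orbit_eq n h hh heven',
        show ZTP.fZ n h ((0 : Fin 2), (⟨n/2, by omega⟩ : Fin (n+1)), (0 : ZMod h)) = ZTP.fv n 0 (n/2) from rfl,
        ZTP.level_eq n h heven' 0 (n/2) (by omega), h10,
        show n - n/2 = n/2 from by omega]
      exact hS
end

section
/- Let n be odd, h be odd, h ≥ 2, n ≥ 1, and suppose h > n + 2. Then for any vertex u ∈ V^0_0 of ZT(n,h), the sum of the distances from u to the vertices of V^1_n equals d(u, V^1_n) = ½(h² + 2hn + n² + 2n). -/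
open SimpleGraph

/-!
Write a vertex of `V¹ₙ` as `v¹_{n, a+j}` with `0 ≤ j < h`. Climbing the `n` layers while moving
`j` steps around the tube in one direction, or `h - 1 - j` steps in the other (where climbing and
moving can share steps), gives walks of lengths `2(n + j) + 1` and `2 max(n, h - 1 - j) + 1`.
They are optimal: lift a walk to the cover in which the cyclic index lives in `ℤ`; there every edge
is one of three vectors or their negatives, so a walk is at least as long as the `ℓ¹`-norm of its
displacement in that basis. Hence `d(u, v¹_{n,a+j}) = 2 max(n, min(n + j, h - 1 - j)) + 1`. With
`h = n + 2A`, the values at `j` and `A + j` add up to `4n + 2A` for `j < A`, and the last `n`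
values are `2n + 1`; summing gives the formula.
-/

open SimpleGraph Finset

theorem SimpleGraph.edist_le_two_of_adj {V : Type*} {G : SimpleGraph V} {u v w : V}
    (huv : G.Adj u v) (hvw : G.Adj v w) : G.edist u w ≤ 2 :=
  (edist_le (.cons huv (.cons hvw .nil))).trans_eq rfl

theorem SimpleGraph.edist_le_of_chain {V : Type*} {G : SimpleGraph V} (f : ℕ → V) (r : ℕ∞)
    (s : ℕ) (hf : ∀ m < s, G.edist (f m) (f (m + 1)) ≤ r) : G.edist (f 0) (f s) ≤ s * r := by
  induction s with
  | zero => simp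
  | succ s ih =>
    calc G.edist (f 0) (f (s + 1)) ≤ G.edist (f 0) (f s) + G.edist (f s) (f (s + 1)) :=
          G.edist_triangle
      _ ≤ s * r + r := add_le_add (ih fun m hm ↦ hf m (by omega)) (hf s (by omega))
      _ = (s + 1 : ℕ) * r := by push_cast; ring

theorem SimpleGraph.dist_le_of_edist_le {V : Type*} {G : SimpleGraph V} {u v : V} {k : ℕ}
    (h : G.edist u v ≤ k) : G.dist u v ≤ k := by
  have hr : G.Reachable u v := reachable_of_edist_ne_top (ne_top_of_le_ne_top (by simp) h)
  exact_mod_cast hr.coe_dist_eq_edist ▸ h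

theorem ZMod.sum_comp_val {M : Type*} [AddCommMonoid M] (h : ℕ) [NeZero h] (g : ℕ → M) :
    ∑ c : ZMod h, g c.val = ∑ j ∈ range h, g j :=
  Finset.sum_nbij' ZMod.val Nat.cast (fun c _ ↦ mem_range.2 c.val_lt) (fun _ _ ↦ mem_univ _)
    (fun c _ ↦ ZMod.natCast_zmod_val c) (fun _ hj ↦ ZMod.val_cast_of_lt (mem_range.1 hj))
    (fun _ _ ↦ rfl)

namespace ZT

variable {n h : ℕ}

theorem adj_type (i : Fin (n + 1)) (c : ZMod h) : (ZT n h).Adj (0, i, c) (1, i, c) := by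
  simp [ZT]

theorem adj_index (i : Fin (n + 1)) (c : ZMod h) : (ZT n h).Adj (1, i, c) (0, i, c + 1) := by
  simp [ZT]

theorem adj_layer {i i' : Fin (n + 1)} (hi : (i' : ℕ) = i + 1) (c : ZMod h) :
    (ZT n h).Adj (1, i, c) (0, i', c) := by
  simp [ZT, hi]

theorem edist_add_index_le (i : Fin (n + 1)) (c : ZMod h) (s : ℕ) :
    (ZT n h).edist (0, i, c) (0, i, c + (s : ZMod h)) ≤ 2 * s := by
  have := edist_le_of_chain (G := ZT n h) (fun m ↦ (0, i, c + (m : ZMod h))) 2 s fun m _ ↦ by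
    have hc : c + ((m + 1 : ℕ) : ZMod h) = c + m + 1 := by push_cast; ring
    rw [hc]
    exact edist_le_two_of_adj (adj_type i _) (adj_index i _)
  simpa [mul_comm] using this

theorem edist_sub_index_le (i : Fin (n + 1)) (c : ZMod h) (s : ℕ) :
    (ZT n h).edist (0, i, c) (0, i, c - (s : ZMod h)) ≤ 2 * s := by
  have := edist_le_of_chain (G := ZT n h) (fun m ↦ (0, i, c - (m : ZMod h))) 2 s fun m _ ↦ by
    have hc : c - (m : ZMod h) = c - ((m + 1 : ℕ) : ZMod h) + 1 := by push_cast; ring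
    rw [hc]
    exact edist_le_two_of_adj (adj_index i _).symm (adj_type i _).symm
  simpa [mul_comm] using this

open Fin.NatCast in
theorem edist_last_sub_le_of_le {l : ℕ} (hl : l ≤ n) (c : ZMod h) :
    (ZT n h).edist (0, 0, c) (0, Fin.last n, c - (l : ZMod h)) ≤ 2 * n := by
  have hval : ∀ m ≤ n, ((m : Fin (n + 1)) : ℕ) = m := fun m hm ↦ Fin.val_cast_of_lt (by omega)
  have := edist_le_of_chain (G := ZT n h)
    (fun m ↦ (0, (m : Fin (n + 1)), c - ((min m l : ℕ) : ZMod h))) 2 n fun m hm ↦ by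
      have hlayer : (((m + 1 : ℕ) : Fin (n + 1)) : ℕ) = (m : Fin (n + 1)) + 1 := by
        rw [hval _ (by omega), hval _ (by omega)]
      rcases lt_or_ge m l with hml | hml
      · have hc : c - ((min m l : ℕ) : ZMod h) = c - ((min (m + 1) l : ℕ) : ZMod h) + 1 := by
          rw [min_eq_left hml.le, min_eq_left hml]; push_cast; ring
        rw [hc]
        exact edist_le_two_of_adj (adj_index _ _).symm (adj_layer hlayer _)
      · rw [min_eq_right hml, min_eq_right (by omega)]
        exact edist_le_two_of_adj (adj_type _ _) (adj_layer hlayer _)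
  simpa [min_eq_right hl, mul_comm] using this

/-- In the cover where the index `j` lives in `ℤ`, an edge changes (type, index, layer) by
`±(1, 0, 0)`, `±(-1, 1, 0)` or `±(-1, 0, 1)`. `liftNorm x y D` is the `ℓ¹`-norm, in this basis, of
the displacement from `x` to `y` whose index component is `D`. -/
def liftNorm (x y : ZTVert n h) (D : ℤ) : ℤ :=
  |((y.1 : ℕ) - (x.1 : ℕ) : ℤ) + D + ((y.2.1 : ℕ) - (x.2.1 : ℕ) : ℤ)| + |D| +
    |((y.2.1 : ℕ) - (x.2.1 : ℕ) : ℤ)|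

theorem liftNorm_add_le (x z y : ZTVert n h) (δ D : ℤ) :
    liftNorm x y (δ + D) ≤ liftNorm x z δ + liftNorm z y D := by
  unfold liftNorm
  grind [abs_add_le]

theorem exists_liftNorm_le_one_of_adj {x z : ZTVert n h} (hxz : (ZT n h).Adj x z) :
    ∃ δ : ℤ, (δ : ZMod h) = z.2.2 - x.2.2 ∧ liftNorm x z δ ≤ 1 := by
  obtain ⟨xk, xi, xc⟩ := x
  obtain ⟨zk, zi, zc⟩ := z
  simp only [ZT, fromRel_adj] at hxz
  rcases hxz with ⟨-, (⟨rfl, rfl, rfl, rfl⟩ | ⟨rfl, rfl, rfl, rfl⟩ | ⟨rfl, rfl, hi, rfl⟩) |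
    (⟨rfl, rfl, rfl, rfl⟩ | ⟨rfl, rfl, rfl, rfl⟩ | ⟨rfl, rfl, hi, rfl⟩)⟩
  · exact ⟨0, by simp, by simp [liftNorm]⟩
  · exact ⟨1, by simp, by simp [liftNorm]⟩
  · exact ⟨0, by simp, by simp [liftNorm, hi]⟩
  · exact ⟨0, by simp, by simp [liftNorm]⟩
  · exact ⟨-1, by simp, by simp [liftNorm]⟩
  · exact ⟨0, by simp, by simp [liftNorm, hi]⟩

theorem exists_liftNorm_le_length {x y : ZTVert n h} (w : (ZT n h).Walk x y) :
    ∃ D : ℤ, (D : ZMod h) = y.2.2 - x.2.2 ∧ liftNorm x y D ≤ w.length := by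
  induction w with
  | nil => exact ⟨0, by simp, by simp [liftNorm]⟩
  | @cons x z y hxz w ih =>
    obtain ⟨δ, hδ, hstep⟩ := exists_liftNorm_le_one_of_adj hxz
    obtain ⟨D, hD, hw⟩ := ih
    refine ⟨δ + D, by push_cast; rw [hδ, hD]; ring, ?_⟩
    have := liftNorm_add_le x z y δ D
    simp only [Walk.length_cons, Nat.cast_succ]
    linarith

theorem edist_last_add_le (c : ZMod h) (j : ℕ) :
    (ZT n h).edist (0, 0, c) (0, Fin.last n, c + (j : ZMod h)) ≤ 2 * (n + j) :=
  calc _ ≤ (ZT n h).edist (0, 0, c) (0, Fin.last n, c) +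
        (ZT n h).edist (0, Fin.last n, c) (0, Fin.last n, c + (j : ZMod h)) :=
        (ZT n h).edist_triangle
    _ ≤ 2 * n + 2 * j := by
        gcongr
        · simpa using edist_last_sub_le_of_le (h := h) (Nat.zero_le n) c
        · exact edist_add_index_le _ c j
    _ = 2 * (n + j) := by ring

theorem edist_last_sub_le (c : ZMod h) (s : ℕ) :
    (ZT n h).edist (0, 0, c) (0, Fin.last n, c - (s : ZMod h)) ≤ 2 * max n s := by
  rcases le_total s n with hs | hs
  · rw [max_eq_left hs]
    exact edist_last_sub_le_of_le hs c
  · have hc : c - (s : ZMod h) = c - (n : ZMod h) - ((s - n : ℕ) : ZMod h) := by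
      rw [Nat.cast_sub hs]; ring
    calc _ ≤ (ZT n h).edist (0, 0, c) (0, Fin.last n, c - (n : ZMod h)) +
          (ZT n h).edist (0, Fin.last n, c - (n : ZMod h)) (0, Fin.last n, c - (s : ZMod h)) :=
          (ZT n h).edist_triangle
      _ ≤ 2 * n + 2 * (s - n : ℕ) := by
          gcongr
          · exact edist_last_sub_le_of_le le_rfl c
          · rw [hc]; exact edist_sub_index_le _ _ _
      _ = 2 * max n s := by rw [max_eq_right hs]; norm_cast; omega

def distProfile (n h j : ℕ) : ℕ := 2 * max n (min (n + j) (h - 1 - j)) + 1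

theorem edist_le_distProfile [NeZero h] (a b : ZMod h) :
    (ZT n h).edist (0, 0, a) (1, Fin.last n, b) ≤ distProfile n h (b - a).val := by
  set j := (b - a).val
  have hj : j < h := ZMod.val_lt _
  have hbj : b = a + j := by simp [j]
  have hbs : b + 1 = a - ((h - 1 - j : ℕ) : ZMod h) := by
    rw [Nat.cast_sub (by omega), Nat.cast_sub (by omega), ZMod.natCast_self, hbj]; ring
  have hfwd : (ZT n h).edist (0, 0, a) (1, Fin.last n, b) ≤ (2 * (n + j) : ℕ) + 1 :=
    calc _ ≤ (ZT n h).edist (0, 0, a) (0, Fin.last n, b) +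
          (ZT n h).edist (0, Fin.last n, b) (1, Fin.last n, b) := (ZT n h).edist_triangle
      _ ≤ (2 * (n + j) : ℕ) + 1 := by
          gcongr
          · rw [hbj]; exact_mod_cast edist_last_add_le a j
          · exact (edist_eq_one_iff_adj.2 (adj_type _ _)).le
  have hbwd : (ZT n h).edist (0, 0, a) (1, Fin.last n, b) ≤ (2 * max n (h - 1 - j) : ℕ) + 1 :=
    calc _ ≤ (ZT n h).edist (0, 0, a) (0, Fin.last n, b + 1) +
          (ZT n h).edist (0, Fin.last n, b + 1) (1, Fin.last n, b) := (ZT n h).edist_triangle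
      _ ≤ (2 * max n (h - 1 - j) : ℕ) + 1 := by
          gcongr
          · rw [hbs]; exact_mod_cast edist_last_sub_le a _
          · exact (edist_eq_one_iff_adj.2 (adj_index _ _).symm).le
  calc _ ≤ ((min (2 * (n + j) + 1) (2 * max n (h - 1 - j) + 1) : ℕ) : ℕ∞) := le_min hfwd hbwd
    _ = distProfile n h j := by
        congr 1; simp only [distProfile]; omega

theorem distProfile_le_dist [NeZero h] {a b : ZMod h}
    (hr : (ZT n h).Reachable (0, 0, a) (1, Fin.last n, b)) :
    distProfile n h (b - a).val ≤ (ZT n h).dist (0, 0, a) (1, Fin.last n, b) := by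
  set j := (b - a).val
  obtain ⟨w, hw⟩ := hr.exists_walk_length_eq_dist
  obtain ⟨D, hD, hlen⟩ := exists_liftNorm_le_length w
  have hDj : D ≥ j ∨ D ≤ j - h := by
    have hD' : (D : ZMod h) = ((j : ℤ) : ZMod h) := by simpa [j] using hD
    obtain ⟨t, ht⟩ := (ZMod.intCast_eq_intCast_iff_dvd_sub _ _ _).1 hD'
    rcases le_or_gt t 0 with ht0 | ht0
    · left; nlinarith
    · right; nlinarith
  simp only [liftNorm, Fin.isValue, Fin.coe_ofNat_eq_mod, Nat.mod_succ, Nat.cast_one,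
    Nat.zero_mod, CharP.cast_eq_zero, sub_zero, Fin.val_last, Nat.abs_cast, hw] at hlen
  have hj : j < h := ZMod.val_lt _
  have := le_abs_self (1 + D + n)
  have := neg_abs_le (1 + D + n)
  have := le_abs_self D
  have := neg_abs_le D
  simp only [distProfile]
  omega

theorem dist_eq_distProfile [NeZero h] (a b : ZMod h) :
    (ZT n h).dist (0, 0, a) (1, Fin.last n, b) = distProfile n h (b - a).val :=
  have hle := edist_le_distProfile (n := n) a b
  (dist_le_of_edist_le hle).antisymm
    (distProfile_le_dist (reachable_of_edist_ne_top (ne_top_of_le_ne_top (by simp) hle)))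

theorem sum_distProfile (n A : ℕ) :
    ∑ j ∈ range (n + 2 * A), distProfile n (n + 2 * A) j =
      2 * A * (2 * n + A) + n * (2 * n + 1) := by
  have hpair : ∀ k ∈ range A,
      distProfile n (n + 2 * A) k + distProfile n (n + 2 * A) (A + k) = 4 * n + 2 * A := by
    intro k hk
    simp only [mem_range] at hk
    simp only [distProfile]
    omega
  have htail : ∀ k ∈ range n, distProfile n (n + 2 * A) (A + A + k) = 2 * n + 1 := by
    intro k _
    simp only [distProfile]
    omega
  rw [show range (n + 2 * A) = range (A + A + n) by congr 1; ring, sum_range_add, sum_range_add,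
    ← sum_add_distrib, sum_congr rfl hpair, sum_congr rfl htail]
  simp only [sum_const, card_range, smul_eq_mul]
  ring

end ZT

theorem dist_sum_V1n_general (n h : ℕ)
    (hnodd : Odd n) (hhodd : Odd h) (hgt : n + 2 < h)
    (u : ZTVert n h) (hu : u ∈ ZTVset n h 0 0) :
    ∑ᶠ y ∈ ZTVset n h 1 n, ((ZT n h).dist u y : ℝ) =
      ((h : ℝ) ^ 2 + 2 * h * n + (n : ℝ) ^ 2 + 2 * n) / 2 := by
  obtain ⟨A, rfl⟩ : ∃ A, h = n + 2 * A := by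
    obtain ⟨p, rfl⟩ := hnodd
    obtain ⟨q, rfl⟩ := hhodd
    exact ⟨q - p, by omega⟩
  have : NeZero (n + 2 * A) := ⟨by omega⟩
  obtain ⟨k, i, a⟩ := u
  obtain ⟨rfl, hi⟩ := hu
  obtain rfl : i = 0 := Fin.ext hi
  have hV : ZTVset n (n + 2 * A) 1 n = Set.range fun b ↦ (1, Fin.last n, b) := by
    ext ⟨k, i, b⟩
    simp [ZTVset, Fin.ext_iff, eq_comm]
  rw [hV, finsum_mem_range fun b b' hbb' ↦ congrArg (·.2.2) hbb', finsum_eq_sum_of_fintype,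
    ← Nat.cast_sum]
  simp only [ZT.dist_eq_distProfile]
  rw [Fintype.sum_equiv (Equiv.subRight a) (fun b ↦ ZT.distProfile n (n + 2 * A) (b - a).val)
    (fun c ↦ ZT.distProfile n (n + 2 * A) c.val) fun _ ↦ rfl, ZMod.sum_comp_val, ZT.sum_distProfile]
  push_cast
  ring

/-- Let `n` and `h` be odd, `h ≥ 2`, `n ≥ 1`, and `h > n + 2`.
Then for any vertex `u ∈ V⁰₀` of `ZT(n,h)`, the sum of the distances from `u` to
the vertices of `V¹ₙ` equals `½(h² + 2hn + n² + 2n)`. -/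
theorem dist_sum_V1n (n h : ℕ) (hn : 1 ≤ n) (hh : 2 ≤ h)
    (hnodd : Odd n) (hhodd : Odd h) (hgt : n + 2 < h)
    (u : ZTVert n h) (hu : u ∈ ZTVset n h 0 0) :
    ∑ᶠ y ∈ ZTVset n h 1 n, ((ZT n h).dist u y : ℝ) =
      ((h : ℝ) ^ 2 + 2 * h * n + (n : ℝ) ^ 2 + 2 * n) / 2 :=
  dist_sum_V1n_general n h hnodd hhodd hgt u hu
end

section
/- Let n be odd, h be odd, h ≥ 2, n ≥ 1, and suppose h ≤ n + 2. Then the Wiener index of the orbit O^0_0 = V^0_0 ∪ V^1_n of ZT(n,h) equals W(O^0_0) = (h/2)(h² + 4hn + 2h − 1). -/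
open SimpleGraph

/-- The Wiener index of a set `S` of vertices of a graph `G`:
`W(S) = ½ ∑_{u ∈ S} ∑_{v ∈ S} d_G(u,v)`. -/
noncomputable def setWiener {V : Type*} (G : SimpleGraph V) (S : Set V) : ℝ :=
  (1 / 2) * ∑ᶠ u ∈ S, ∑ᶠ v ∈ S, (G.dist u v : ℝ)

namespace ZTaux
variable {n h : ℕ}
lemma adj_iff {a b : ZTVert n h} : (ZT n h).Adj a b ↔ a ≠ b ∧
    (((a.1 = 0 ∧ b.1 = 1 ∧ a.2.1 = b.2.1 ∧ a.2.2 = b.2.2) ∨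
    (a.1 = 1 ∧ b.1 = 0 ∧ a.2.1 = b.2.1 ∧ b.2.2 = a.2.2 + 1) ∨
    (a.1 = 1 ∧ b.1 = 0 ∧ (b.2.1 : ℕ) = (a.2.1 : ℕ) + 1 ∧ a.2.2 = b.2.2)) ∨
    ((b.1 = 0 ∧ a.1 = 1 ∧ b.2.1 = a.2.1 ∧ b.2.2 = a.2.2) ∨
    (b.1 = 1 ∧ a.1 = 0 ∧ b.2.1 = a.2.1 ∧ a.2.2 = b.2.2 + 1) ∨
    (b.1 = 1 ∧ a.1 = 0 ∧ (a.2.1 : ℕ) = (b.2.1 : ℕ) + 1 ∧ b.2.2 = a.2.2))) := by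
  rw [ZT, SimpleGraph.fromRel_adj]

/-- The circular potential, with values in `ZMod (2h)`. -/
def fpot (v : ZTVert n h) : ZMod (2 * h) := ((2 * v.2.2.val + (v.1 : ℕ) : ℕ) : ZMod (2 * h))

lemma cast2succ (hh : 2 ≤ h) (j : ZMod h) :
    ((2 * (j + 1).val : ℕ) : ZMod (2 * h)) = ((2 * j.val : ℕ) : ZMod (2 * h)) + 2 := by
  haveI : NeZero h := ⟨by omega⟩
  haveI : Fact (1 < h) := ⟨by omega⟩
  have hva : (j + 1).val = (j.val + 1) % h := by
    rw [ZMod.val_add, ZMod.val_one]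
  have hlt : j.val < h := j.val_lt
  rcases Nat.lt_or_ge (j.val + 1) h with hc | hc
  · rw [hva, Nat.mod_eq_of_lt hc]
    push_cast
    ring
  · have hj : j.val = h - 1 := by omega
    have : (j.val + 1) % h = 0 := by
      have : j.val + 1 = h := by omega
      simp [this]
    rw [hva, this]
    have h2 : ((2 * j.val : ℕ) : ZMod (2 * h)) + 2 = ((2 * j.val + 2 : ℕ) : ZMod (2 * h)) := by
      push_cast; ring
    rw [h2]
    have : 2 * j.val + 2 = 2 * h := by omega
    rw [this]
    simp

lemma fpot_adj (hh : 2 ≤ h) {a b : ZTVert n h} (hab : (ZT n h).Adj a b) :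
    fpot b = fpot a + 1 ∨ fpot a = fpot b + 1 := by
  rw [adj_iff] at hab
  obtain ⟨-, hr⟩ := hab
  unfold fpot
  rcases hr with (⟨ha, hb, -, hj⟩ | ⟨ha, hb, -, hj⟩ | ⟨ha, hb, -, hj⟩) |
    (⟨hb, ha, -, hj⟩ | ⟨hb, ha, -, hj⟩ | ⟨hb, ha, -, hj⟩) <;>
    rw [ha, hb] <;> simp only [Fin.val_zero, Fin.val_one]
  · left; rw [hj]; push_cast; ring
  · left; rw [hj]; simp only [Nat.add_zero]; rw [cast2succ hh]; push_cast; ring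
  · right; rw [hj]; push_cast; ring
  · right; rw [hj]; push_cast; ring
  · right; rw [hj]; simp only [Nat.add_zero]; rw [cast2succ hh]; push_cast; ring
  · left; rw [hj]; push_cast; ring

lemma nu_add {M : ℕ} (x y : ZMod M) :
    (x + y).valMinAbs.natAbs ≤ x.valMinAbs.natAbs + y.valMinAbs.natAbs :=
  (ZMod.natAbs_valMinAbs_add_le x y).trans (Int.natAbs_add_le _ _)

lemma nu_one (hh : 2 ≤ h) : (1 : ZMod (2 * h)).valMinAbs.natAbs = 1 := by
  have h1 : ((1 : ℕ) : ZMod (2 * h)).valMinAbs = (1 : ℕ) := by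
    apply ZMod.valMinAbs_natCast_of_le_half
    omega
  rw [show (1 : ZMod (2*h)) = ((1:ℕ) : ZMod (2*h)) by push_cast; ring, h1]
  rfl

lemma fpot_walk (hh : 2 ≤ h) {u v : ZTVert n h} (p : (ZT n h).Walk u v) :
    (fpot v - fpot u).valMinAbs.natAbs ≤ p.length := by
  induction p with
  | nil => simp
  | @cons u w v hadj q ih =>
    have hstep : (fpot w - fpot u).valMinAbs.natAbs = 1 := by
      rcases fpot_adj hh hadj with hx | hx
      · rw [hx, show fpot u + 1 - fpot u = 1 by ring, nu_one hh]
      · rw [hx, show fpot w - (fpot w + 1) = -(1) by ring, ZMod.natAbs_valMinAbs_neg,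
          nu_one hh]
    have h1 : (fpot v - fpot u).valMinAbs.natAbs ≤
        (fpot v - fpot w).valMinAbs.natAbs + (fpot w - fpot u).valMinAbs.natAbs := by
      have he : fpot v - fpot u = (fpot v - fpot w) + (fpot w - fpot u) := by ring
      rw [he]; exact nu_add _ _
    rw [Walk.length_cons]
    omega

lemma adj_A (i : Fin (n+1)) (j : ZMod h) :
    (ZT n h).Adj ((0 : Fin 2), i, j) ((1 : Fin 2), i, j) := by
  rw [adj_iff]
  exact ⟨by simp [Prod.ext_iff], Or.inl (Or.inl ⟨rfl, rfl, rfl, rfl⟩)⟩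

lemma adj_B (i : Fin (n+1)) (j : ZMod h) :
    (ZT n h).Adj ((1 : Fin 2), i, j) ((0 : Fin 2), i, j + 1) := by
  rw [adj_iff]
  exact ⟨by simp [Prod.ext_iff], Or.inl (Or.inr (Or.inl ⟨rfl, rfl, rfl, rfl⟩))⟩

lemma adj_C (i₁ i₂ : Fin (n+1)) (hi : (i₂ : ℕ) = (i₁ : ℕ) + 1) (j : ZMod h) :
    (ZT n h).Adj ((1 : Fin 2), i₁, j) ((0 : Fin 2), i₂, j) := by
  rw [adj_iff]
  exact ⟨by simp [Prod.ext_iff], Or.inl (Or.inr (Or.inr ⟨rfl, rfl, hi, rfl⟩))⟩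

/-- The layer potential. -/
def phi (v : ZTVert n h) : ℤ := 2 * (v.2.1 : ℕ) + (v.1 : ℕ)

lemma phi_adj {a b : ZTVert n h} (hab : (ZT n h).Adj a b) : (phi a - phi b).natAbs = 1 := by
  rw [adj_iff] at hab
  obtain ⟨-, hr⟩ := hab
  unfold phi
  rcases hr with (⟨ha, hb, hi, -⟩ | ⟨ha, hb, hi, -⟩ | ⟨ha, hb, hi, -⟩) |
    (⟨hb, ha, hi, -⟩ | ⟨hb, ha, hi, -⟩ | ⟨hb, ha, hi, -⟩) <;>
    rw [ha, hb] <;>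
    first
      | (have hii : ((a.2.1 : ℕ) : ℤ) = ((b.2.1 : ℕ) : ℤ) := by rw [hi]
         simp only [Fin.val_zero, Fin.val_one]; omega)
      | (have hii : ((b.2.1 : ℕ) : ℤ) = ((a.2.1 : ℕ) : ℤ) := by rw [hi]
         simp only [Fin.val_zero, Fin.val_one]; omega)
      | (have hii : ((b.2.1 : ℕ) : ℤ) = ((a.2.1 : ℕ) : ℤ) + 1 := by exact_mod_cast congrArg (Nat.cast : ℕ → ℤ) hi
         simp only [Fin.val_zero, Fin.val_one]; omega)
      | (have hii : ((a.2.1 : ℕ) : ℤ) = ((b.2.1 : ℕ) : ℤ) + 1 := by exact_mod_cast congrArg (Nat.cast : ℕ → ℤ) hi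
         simp only [Fin.val_zero, Fin.val_one]; omega)

lemma phi_walk {u v : ZTVert n h} (p : (ZT n h).Walk u v) :
    (phi u - phi v).natAbs ≤ p.length := by
  induction p with
  | nil => simp
  | @cons u w v hadj q ih =>
    have h1 : (phi u - phi v).natAbs ≤ (phi u - phi w).natAbs + (phi w - phi v).natAbs := by
      have : phi u - phi v = (phi u - phi w) + (phi w - phi v) := by ring
      rw [this]; exact Int.natAbs_add_le _ _
    rw [Walk.length_cons]
    have := phi_adj hadj
    omega

lemma val_sub_one [NeZero h] {δ : ZMod h} (hδ : 1 ≤ δ.val) : (δ - 1).val = δ.val - 1 := by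
  have hlt : δ.val < h := δ.val_lt
  have h1 : δ - 1 = ((δ.val - 1 : ℕ) : ZMod h) := by
    have hδc : ((δ.val : ℕ) : ZMod h) = δ := ZMod.natCast_zmod_val δ
    rw [Nat.cast_sub hδ, hδc, Nat.cast_one]
  rw [h1, ZMod.val_cast_of_lt (by omega)]

lemma adj_B' (i : Fin (n+1)) (x : ZMod h) :
    (ZT n h).Adj ((1 : Fin 2), i, x - 1) ((0 : Fin 2), i, x) := by
  have e := adj_B i (x - 1)
  have hx : (x - 1) + 1 = x := by ring
  rwa [hx] at e

lemma exists_walk_cast {u v v' : ZTVert n h} {L : ℕ} (hv : v = v')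
    (hex : ∃ p : (ZT n h).Walk u v, p.length = L) :
    ∃ p : (ZT n h).Walk u v', p.length = L := by
  subst hv; exact hex

lemma exists_walk_up0 (i : Fin (n+1)) (j : ZMod h) (d : ℕ) :
    ∃ p : (ZT n h).Walk ((0 : Fin 2), i, j) ((0 : Fin 2), i, j + (d : ZMod h)),
      p.length = 2 * d := by
  induction d with
  | zero =>
    refine ⟨Walk.nil.copy rfl ?_, by simp⟩
    push_cast
    rw [add_zero]
  | succ d ih =>
    obtain ⟨p, hp⟩ := ih
    let q : (ZT n h).Walk ((0 : Fin 2), i, (j + (d : ZMod h))) ((0 : Fin 2), i, (j + (d : ZMod h)) + 1) :=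
      Walk.cons (adj_A i (j + (d : ZMod h))) (Walk.cons (adj_B i (j + (d : ZMod h))) Walk.nil)
    have hend : ((0 : Fin 2), i, (j + (d : ZMod h)) + 1) = ((0 : Fin 2), i, j + ((d + 1 : ℕ) : ZMod h)) := by
      push_cast; ring_nf
    refine ⟨((p.append q).copy rfl hend), ?_⟩
    have hlen : ((p.append q).copy rfl hend).length = p.length + q.length := by
      rw [Walk.length_copy, Walk.length_append]
    have hq2 : q.length = 2 := rfl
    rw [hlen, hq2, hp]
    omega

lemma exists_walk_down0 (i : Fin (n+1)) (j : ZMod h) (d : ℕ) :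
    ∃ p : (ZT n h).Walk ((0 : Fin 2), i, j) ((0 : Fin 2), i, j - (d : ZMod h)),
      p.length = 2 * d := by
  induction d with
  | zero =>
    refine ⟨Walk.nil.copy rfl ?_, by simp⟩
    push_cast
    rw [sub_zero]
  | succ d ih =>
    obtain ⟨p, hp⟩ := ih
    let q : (ZT n h).Walk ((0 : Fin 2), i, (j - (d : ZMod h))) ((0 : Fin 2), i, (j - (d : ZMod h)) - 1) :=
      Walk.cons (adj_B' i (j - (d : ZMod h))).symm (Walk.cons (adj_A i ((j - (d : ZMod h)) - 1)).symm Walk.nil)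
    have hend : ((0 : Fin 2), i, (j - (d : ZMod h)) - 1) = ((0 : Fin 2), i, j - ((d + 1 : ℕ) : ZMod h)) := by
      push_cast; ring_nf
    refine ⟨((p.append q).copy rfl hend), ?_⟩
    have hlen : ((p.append q).copy rfl hend).length = p.length + q.length := by
      rw [Walk.length_copy, Walk.length_append]
    have hq2 : q.length = 2 := rfl
    rw [hlen, hq2, hp]
    omega

lemma exists_walk_up1 (i : Fin (n+1)) (j : ZMod h) (d : ℕ) :
    ∃ p : (ZT n h).Walk ((1 : Fin 2), i, j) ((1 : Fin 2), i, j + (d : ZMod h)),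
      p.length = 2 * d := by
  induction d with
  | zero =>
    refine ⟨Walk.nil.copy rfl ?_, by simp⟩
    push_cast
    rw [add_zero]
  | succ d ih =>
    obtain ⟨p, hp⟩ := ih
    let q : (ZT n h).Walk ((1 : Fin 2), i, (j + (d : ZMod h))) ((1 : Fin 2), i, (j + (d : ZMod h)) + 1) :=
      Walk.cons (adj_B i (j + (d : ZMod h))) (Walk.cons (adj_A i ((j + (d : ZMod h)) + 1)) Walk.nil)
    have hend : ((1 : Fin 2), i, (j + (d : ZMod h)) + 1) = ((1 : Fin 2), i, j + ((d + 1 : ℕ) : ZMod h)) := by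
      push_cast; ring_nf
    refine ⟨((p.append q).copy rfl hend), ?_⟩
    have hlen : ((p.append q).copy rfl hend).length = p.length + q.length := by
      rw [Walk.length_copy, Walk.length_append]
    have hq2 : q.length = 2 := rfl
    rw [hlen, hq2, hp]
    omega

lemma exists_walk_down1 (i : Fin (n+1)) (j : ZMod h) (d : ℕ) :
    ∃ p : (ZT n h).Walk ((1 : Fin 2), i, j) ((1 : Fin 2), i, j - (d : ZMod h)),
      p.length = 2 * d := by
  induction d with
  | zero =>
    refine ⟨Walk.nil.copy rfl ?_, by simp⟩
    push_cast
    rw [sub_zero]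
  | succ d ih =>
    obtain ⟨p, hp⟩ := ih
    let q : (ZT n h).Walk ((1 : Fin 2), i, (j - (d : ZMod h))) ((1 : Fin 2), i, (j - (d : ZMod h)) - 1) :=
      Walk.cons (adj_A i (j - (d : ZMod h))).symm (Walk.cons (adj_B' i (j - (d : ZMod h))).symm Walk.nil)
    have hend : ((1 : Fin 2), i, (j - (d : ZMod h)) - 1) = ((1 : Fin 2), i, j - ((d + 1 : ℕ) : ZMod h)) := by
      push_cast; ring_nf
    refine ⟨((p.append q).copy rfl hend), ?_⟩
    have hlen : ((p.append q).copy rfl hend).length = p.length + q.length := by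
      rw [Walk.length_copy, Walk.length_append]
    have hq2 : q.length = 2 := rfl
    rw [hlen, hq2, hp]
    omega

lemma exists_walk_cross (hh : 2 ≤ h) :
    ∀ t, ∀ i : Fin (n+1), (i : ℕ) + t = n → ∀ j j' : ZMod h, (j - j').val ≤ t + 1 →
    ∃ p : (ZT n h).Walk ((0 : Fin 2), i, j)
        ((1 : Fin 2), (⟨n, Nat.lt_succ_self n⟩ : Fin (n+1)), j'), p.length = 2 * t + 1 := by
  haveI : NeZero h := ⟨by omega⟩
  intro t
  induction t with
  | zero =>
    intro i hi j j' hv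
    have hieq : i = ⟨n, Nat.lt_succ_self n⟩ := Fin.ext (by simpa using hi)
    subst hieq
    rcases Nat.le_one_iff_eq_zero_or_eq_one.mp hv with h0 | h1
    · have hjj : j = j' := by
        have := (ZMod.val_eq_zero (j - j')).mp h0
        have := sub_eq_zero.mp this
        exact this
      subst hjj
      exact ⟨Walk.cons (adj_A _ j) Walk.nil, rfl⟩
    · have hjj : j = j' + 1 := by
        have hd : j - j' = 1 := by
          have hc := ZMod.natCast_zmod_val (j - j')
          rw [h1] at hc
          simpa using hc.symm
        linear_combination hd
      subst hjj
      exact ⟨Walk.cons (adj_B _ j').symm Walk.nil, rfl⟩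
  | succ t ih =>
    intro i hi j j' hv
    have hlt : (i : ℕ) + 1 < n + 1 := by omega
    set i₂ : Fin (n+1) := ⟨(i : ℕ) + 1, hlt⟩ with hi2def
    have hstep : (i₂ : ℕ) = (i : ℕ) + 1 := rfl
    rcases Nat.eq_zero_or_pos (j - j').val with h0 | h1
    · obtain ⟨p, hp⟩ := ih i₂ (by simp [hstep]; omega) j j' (by omega)
      refine ⟨Walk.cons (adj_A i j) (Walk.cons (adj_C i i₂ hstep j) p), ?_⟩
      simp [hp]; omega
    · have hval : (j - 1 - j').val = (j - j').val - 1 := by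
        have : j - 1 - j' = (j - j') - 1 := by ring
        rw [this, val_sub_one h1]
      obtain ⟨p, hp⟩ := ih i₂ (by simp [hstep]; omega) (j - 1) j' (by omega)
      refine ⟨Walk.cons (adj_B' i j).symm (Walk.cons (adj_C i i₂ hstep (j - 1)) p), ?_⟩
      simp [hp]; omega

lemma fdiff (hh : 2 ≤ h) (j j' : ZMod h) :
    ((2 * j'.val : ℕ) : ZMod (2 * h)) - ((2 * j.val : ℕ) : ZMod (2 * h)) =
      ((2 * (j' - j).val : ℕ) : ZMod (2 * h)) := by
  haveI : NeZero h := ⟨by omega⟩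
  set δ := j' - j with hδdef
  have hj' : j' = j + δ := by rw [hδdef]; ring
  have hval : j'.val = (j.val + δ.val) % h := by rw [hj', ZMod.val_add]
  have hjlt : j.val < h := j.val_lt
  have hδlt : δ.val < h := δ.val_lt
  rcases Nat.lt_or_ge (j.val + δ.val) h with hc | hc
  · have : j'.val = j.val + δ.val := by rw [hval, Nat.mod_eq_of_lt hc]
    rw [this]; push_cast; ring
  · have hv : j'.val = j.val + δ.val - h := by
      rw [hval]
      have : (j.val + δ.val) % h = (j.val + δ.val - h) % h := by
        conv_lhs => rw [show j.val + δ.val = (j.val + δ.val - h) + h by omega]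
        rw [Nat.add_mod_right]
      rw [this, Nat.mod_eq_of_lt (by omega)]
    have hnat : 2 * j'.val + 2 * h = 2 * j.val + 2 * δ.val := by omega
    have hcast := congrArg (Nat.cast : ℕ → ZMod (2 * h)) hnat
    push_cast at hcast
    have hself : ((2 * h : ℕ) : ZMod (2 * h)) = 0 := ZMod.natCast_self (2 * h)
    push_cast at hself
    push_cast
    linear_combination hcast - hself

lemma fpot_diff_same_k (hh : 2 ≤ h) (k : Fin 2) (i i' : Fin (n+1)) (j j' : ZMod h) :
    fpot (n := n) (k, i', j') - fpot (k, i, j) = ((2 * (j' - j).val : ℕ) : ZMod (2 * h)) := by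
  unfold fpot
  have := fdiff hh j j'
  push_cast at this ⊢
  linear_combination this

lemma dist_lb (hh : 2 ≤ h) (k : Fin 2) (i i' : Fin (n+1)) (j j' : ZMod h)
    (hr : (ZT n h).Reachable (k, i, j) (k, i', j')) :
    min (2 * (j' - j).val) (2 * h - 2 * (j' - j).val) ≤ (ZT n h).dist (k, i, j) (k, i', j') := by
  haveI : NeZero h := ⟨by omega⟩
  haveI : NeZero (2 * h) := ⟨by omega⟩
  obtain ⟨q, hq⟩ := hr.exists_walk_length_eq_dist
  have hlb := fpot_walk hh q
  rw [hq, fpot_diff_same_k hh k i i' j j'] at hlb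
  have hδlt : (j' - j).val < h := (j' - j).val_lt
  have hv2 : ((2 * (j' - j).val : ℕ) : ZMod (2 * h)).val = 2 * (j' - j).val :=
    ZMod.val_cast_of_lt (by omega)
  rw [ZMod.valMinAbs_natAbs_eq_min, hv2] at hlb
  exact hlb

lemma dist_layer (hh : 2 ≤ h) (k : Fin 2) (i : Fin (n+1)) (j j' : ZMod h) :
    (ZT n h).dist ((k, i, j) : ZTVert n h) (k, i, j') =
      2 * min ((j' - j).val) (h - (j' - j).val) := by
  haveI : NeZero h := ⟨by omega⟩
  set δ := j' - j with hδdef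
  have hδlt : δ.val < h := δ.val_lt
  have hup : j + (δ.val : ZMod h) = j' := by
    rw [ZMod.natCast_zmod_val]; ring
  have hdown : j - ((h - δ.val : ℕ) : ZMod h) = j' := by
    rw [Nat.cast_sub hδlt.le, ZMod.natCast_self, ZMod.natCast_zmod_val]; ring
  have hub : (ZT n h).dist ((k, i, j) : ZTVert n h) (k, i, j') ≤
      2 * min (δ.val) (h - δ.val) ∧ (ZT n h).Reachable ((k, i, j) : ZTVert n h) (k, i, j') := by
    fin_cases k
    · rcases le_or_gt δ.val (h - δ.val) with hc | hc
      · obtain ⟨p, hp⟩ := exists_walk_cast (by rw [hup]) (exists_walk_up0 (n := n) i j δ.val)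
        exact ⟨by calc (ZT n h).dist _ _ ≤ p.length := SimpleGraph.dist_le p
            _ = 2 * min (δ.val) (h - δ.val) := by rw [hp, min_eq_left hc], ⟨p⟩⟩
      · obtain ⟨p, hp⟩ := exists_walk_cast (by rw [hdown]) (exists_walk_down0 (n := n) i j (h - δ.val))
        exact ⟨by calc (ZT n h).dist _ _ ≤ p.length := SimpleGraph.dist_le p
            _ = 2 * min (δ.val) (h - δ.val) := by rw [hp, min_eq_right hc.le], ⟨p⟩⟩
    · rcases le_or_gt δ.val (h - δ.val) with hc | hc
      · obtain ⟨p, hp⟩ := exists_walk_cast (by rw [hup]) (exists_walk_up1 (n := n) i j δ.val)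
        exact ⟨by calc (ZT n h).dist _ _ ≤ p.length := SimpleGraph.dist_le p
            _ = 2 * min (δ.val) (h - δ.val) := by rw [hp, min_eq_left hc], ⟨p⟩⟩
      · obtain ⟨p, hp⟩ := exists_walk_cast (by rw [hdown]) (exists_walk_down1 (n := n) i j (h - δ.val))
        exact ⟨by calc (ZT n h).dist _ _ ≤ p.length := SimpleGraph.dist_le p
            _ = 2 * min (δ.val) (h - δ.val) := by rw [hp, min_eq_right hc.le], ⟨p⟩⟩
  have hlb := dist_lb hh k i i j j' hub.2
  rw [← hδdef] at hlb
  omega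

lemma dist_cross (hh : 2 ≤ h) (hle : h ≤ n + 2) (j j' : ZMod h) :
    (ZT n h).dist ((0 : Fin 2), (⟨0, Nat.succ_pos n⟩ : Fin (n+1)), j)
      ((1 : Fin 2), (⟨n, Nat.lt_succ_self n⟩ : Fin (n+1)), j') = 2 * n + 1 := by
  haveI : NeZero h := ⟨by omega⟩
  obtain ⟨p, hp⟩ := exists_walk_cross hh n ⟨0, Nat.succ_pos n⟩ (by simp) j j'
    (by have := (j - j').val_lt; omega)
  have hub := SimpleGraph.dist_le p
  rw [hp] at hub
  obtain ⟨q, hq⟩ := SimpleGraph.Reachable.exists_walk_length_eq_dist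
    (⟨p⟩ : (ZT n h).Reachable _ _)
  have hlb := phi_walk q
  rw [hq] at hlb
  have hphi : (phi ((0 : Fin 2), (⟨0, Nat.succ_pos n⟩ : Fin (n+1)), j) -
      phi ((1 : Fin 2), (⟨n, Nat.lt_succ_self n⟩ : Fin (n+1)), j')).natAbs = 2 * n + 1 := by
    unfold phi
    simp only [Fin.val_zero, Fin.val_one]
    norm_num
    omega
  rw [hphi] at hlb
  omega

lemma sum_zmod_val [NeZero h] (f : ℕ → ℕ) :
    ∑ δ : ZMod h, f δ.val = ∑ d ∈ Finset.range h, f d := by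
  refine Finset.sum_bij' (fun (δ : ZMod h) _ => δ.val) (fun d _ => (d : ZMod h))
    (fun δ _ => Finset.mem_range.mpr δ.val_lt) (fun d _ => Finset.mem_univ _)
    (fun δ _ => ZMod.natCast_zmod_val δ)
    (fun d hd => ZMod.val_cast_of_lt (Finset.mem_range.mp hd)) (fun δ _ => rfl)

lemma sum_min_odd (m : ℕ) :
    ∑ d ∈ Finset.range (2 * m + 1), min d (2 * m + 1 - d) = m * m + m := by
  have hsplit : ∑ d ∈ Finset.range ((m + 1) + m), min d (2 * m + 1 - d) =
      (∑ d ∈ Finset.range (m + 1), min d (2 * m + 1 - d)) +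
        ∑ i ∈ Finset.range m, min ((m + 1) + i) (2 * m + 1 - ((m + 1) + i)) :=
    Finset.sum_range_add _ (m + 1) m
  have h1 : ∑ d ∈ Finset.range (m + 1), min d (2 * m + 1 - d) =
      ∑ d ∈ Finset.range (m + 1), d := by
    refine Finset.sum_congr rfl fun d hd => ?_
    have := Finset.mem_range.mp hd
    omega
  have h2 : ∑ i ∈ Finset.range m, min ((m + 1) + i) (2 * m + 1 - ((m + 1) + i)) =
      ∑ i ∈ Finset.range m, (m - i) := by
    refine Finset.sum_congr rfl fun i hi => ?_
    have := Finset.mem_range.mp hi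
    omega
  have h3 : ∑ i ∈ Finset.range m, (m - i) = ∑ i ∈ Finset.range m, (i + 1) := by
    have := Finset.sum_range_reflect (fun i => m - i) m
    rw [← this]
    refine Finset.sum_congr rfl fun i hi => ?_
    have := Finset.mem_range.mp hi
    omega
  have h4 : (∑ i ∈ Finset.range (m + 1), i) * 2 = (m + 1) * m := by
    rw [Finset.sum_range_id_mul_two]; simp
  have h5 : (∑ i ∈ Finset.range m, i) * 2 = m * (m - 1) := Finset.sum_range_id_mul_two m
  have h6 : ∑ i ∈ Finset.range m, (i + 1) = (∑ i ∈ Finset.range m, i) + m := by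
    rw [Finset.sum_add_distrib, Finset.sum_const, Finset.card_range, smul_eq_mul, mul_one]
  rw [show Finset.range (2 * m + 1) = Finset.range ((m + 1) + m) from by
    rw [show 2 * m + 1 = (m + 1) + m by omega]]
  rw [hsplit, h1, h2, h3, h6]
  have h7 : m * (m - 1) + m = m * m := by
    cases m with
    | zero => simp
    | succ k => simp only [Nat.succ_sub_one]; ring
  have e1 : (m + 1) * m = m * m + m := by ring
  rw [e1] at h4
  omega

end ZTaux

/-- For odd `n ≥ 1` and odd `h ≥ 2` with `h ≤ n + 2`, the Wiener
index of the orbit `O⁰₀ = V⁰₀ ∪ V¹ₙ` of `ZT(n,h)` equals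
`(h/2)(h² + 4hn + 2h − 1)`. -/
theorem wiener_orbit_11 (n h : ℕ) (hn : 1 ≤ n) (hh : 2 ≤ h)
    (hnodd : Odd n) (hhodd : Odd h) (hle : h ≤ n + 2) :
    setWiener (ZT n h) (ZTVset n h 0 0 ∪ ZTVset n h 1 n) = ((h : ℝ) / 2) * ((h : ℝ) ^ 2 + 4 * h * n + 2 * h - 1) := by
  classical
  haveI : NeZero h := ⟨by omega⟩
  obtain ⟨m, hm⟩ := hhodd
  set i0 : Fin (n+1) := ⟨0, Nat.succ_pos n⟩ with hi0
  set iN : Fin (n+1) := ⟨n, Nat.lt_succ_self n⟩ with hiN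
  set FA : Finset (ZTVert n h) := Finset.univ.image (fun j : ZMod h => ((0:Fin 2), i0, j))
    with hFA
  set FB : Finset (ZTVert n h) := Finset.univ.image (fun j : ZMod h => ((1:Fin 2), iN, j))
    with hFB
  have hS : ZTVset n h 0 0 ∪ ZTVset n h 1 n = ↑(FA ∪ FB) := by
    ext v
    obtain ⟨k, i, j⟩ := v
    simp only [Set.mem_union, ZTVset, Set.mem_setOf_eq, Finset.coe_union, hFA, hFB,
      Finset.coe_image, Finset.coe_univ, Set.image_univ, Set.mem_range, Prod.mk.injEq]
    constructor
    · rintro (⟨hk, hi⟩ | ⟨hk, hi⟩)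
      · exact Or.inl ⟨j, hk.symm, (Fin.ext (by simpa [hi0] using hi.symm)), rfl⟩
      · exact Or.inr ⟨j, hk.symm, (Fin.ext (by simpa [hiN] using hi.symm)), rfl⟩
    · rintro (⟨j', hk, hi, hj⟩ | ⟨j', hk, hi, hj⟩)
      · exact Or.inl ⟨hk.symm, by rw [← hi, hi0]⟩
      · exact Or.inr ⟨hk.symm, by rw [← hi, hiN]⟩
  rw [setWiener, hS, finsum_mem_coe_finset]
  have hconv : ∀ u : ZTVert n h,
      ∑ᶠ v ∈ (↑(FA ∪ FB) : Set (ZTVert n h)), ((ZT n h).dist u v : ℝ) =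
        ∑ v ∈ FA ∪ FB, ((ZT n h).dist u v : ℝ) := fun u => finsum_mem_coe_finset _ _
  simp only [hconv]
  have hdisj : Disjoint FA FB := by
    rw [Finset.disjoint_left]
    rintro a haA haB
    rw [hFA, Finset.mem_image] at haA
    rw [hFB, Finset.mem_image] at haB
    obtain ⟨j1, -, rfl⟩ := haA
    obtain ⟨j2, -, heq⟩ := haB
    have := congrArg Prod.fst heq
    simp at this
  have dAA : ∀ j j' : ZMod h, (ZT n h).dist ((0:Fin 2), i0, j) ((0:Fin 2), i0, j') =
      2 * min ((j'-j).val) (h - (j'-j).val) := fun j j' => ZTaux.dist_layer hh 0 i0 j j'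
  have dBB : ∀ j j' : ZMod h, (ZT n h).dist ((1:Fin 2), iN, j) ((1:Fin 2), iN, j') =
      2 * min ((j'-j).val) (h - (j'-j).val) := fun j j' => ZTaux.dist_layer hh 1 iN j j'
  have dAB : ∀ j j' : ZMod h, (ZT n h).dist ((0:Fin 2), i0, j) ((1:Fin 2), iN, j') =
      2 * n + 1 := fun j j' => ZTaux.dist_cross hh hle j j'
  have dBA : ∀ j j' : ZMod h, (ZT n h).dist ((1:Fin 2), iN, j) ((0:Fin 2), i0, j') =
      2 * n + 1 := fun j j' => by rw [SimpleGraph.dist_comm]; exact ZTaux.dist_cross hh hle j' j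
  set T : ℕ := ∑ δ : ZMod h, min δ.val (h - δ.val) with hT
  have hTval : T = m * m + m := by
    rw [hT, ZTaux.sum_zmod_val (fun d => min d (h - d)), hm]
    exact ZTaux.sum_min_odd m
  have hshift : ∀ j : ZMod h, (∑ j' : ZMod h, 2 * min ((j'-j).val) (h - (j'-j).val)) = 2 * T := by
    intro j
    rw [hT, Finset.mul_sum]
    exact (Fintype.sum_equiv (Equiv.addRight j)
      (fun δ : ZMod h => 2 * min δ.val (h - δ.val))
      (fun j' : ZMod h => 2 * min ((j'-j).val) (h - (j'-j).val))
      (fun δ => by simp)).symm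
  have hinjA : ∀ x ∈ (Finset.univ : Finset (ZMod h)), ∀ y ∈ Finset.univ,
      ((0:Fin 2), i0, x) = ((0:Fin 2), i0, y) → x = y :=
    fun x _ y _ hxy => congrArg (fun z : ZTVert n h => z.2.2) hxy
  have hinjB : ∀ x ∈ (Finset.univ : Finset (ZMod h)), ∀ y ∈ Finset.univ,
      ((1:Fin 2), iN, x) = ((1:Fin 2), iN, y) → x = y :=
    fun x _ y _ hxy => congrArg (fun z : ZTVert n h => z.2.2) hxy
  have hcardZ : (Finset.univ : Finset (ZMod h)).card = h := by
    rw [Finset.card_univ, ZMod.card]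
  have innerA : ∀ j : ZMod h, (∑ v ∈ FA ∪ FB, (ZT n h).dist ((0:Fin 2), i0, j) v) =
      2 * T + h * (2 * n + 1) := by
    intro j
    rw [Finset.sum_union hdisj, hFA, hFB, Finset.sum_image hinjA, Finset.sum_image hinjB,
      Finset.sum_congr rfl (fun j' _ => dAA j j'), Finset.sum_congr rfl (fun j' _ => dAB j j'),
      hshift j, Finset.sum_const, hcardZ, smul_eq_mul]
  have innerB : ∀ j : ZMod h, (∑ v ∈ FA ∪ FB, (ZT n h).dist ((1:Fin 2), iN, j) v) =
      2 * T + h * (2 * n + 1) := by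
    intro j
    rw [Finset.sum_union hdisj, hFA, hFB, Finset.sum_image hinjA, Finset.sum_image hinjB,
      Finset.sum_congr rfl (fun j' _ => dBA j j'), Finset.sum_congr rfl (fun j' _ => dBB j j'),
      hshift j, Finset.sum_const, hcardZ, smul_eq_mul]
    omega
  have hNval : (∑ u ∈ FA ∪ FB, ∑ v ∈ FA ∪ FB, (ZT n h).dist u v) =
      h * (2 * T + h * (2 * n + 1)) + h * (2 * T + h * (2 * n + 1)) := by
    rw [Finset.sum_union hdisj, hFA, hFB, Finset.sum_image hinjA, Finset.sum_image hinjB,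
      Finset.sum_congr rfl (fun j _ => innerA j), Finset.sum_congr rfl (fun j _ => innerB j),
      Finset.sum_const, hcardZ, smul_eq_mul]
  have hNat : (∑ u ∈ FA ∪ FB, ∑ v ∈ FA ∪ FB, ((ZT n h).dist u v : ℝ)) =
      ((∑ u ∈ FA ∪ FB, ∑ v ∈ FA ∪ FB, (ZT n h).dist u v : ℕ) : ℝ) := by
    push_cast
    rfl
  rw [hNat, hNval]
  have hT4 : 4 * (T : ℝ) = (h : ℝ) ^ 2 - 1 := by
    have h1 : (T : ℝ) = (m : ℝ) * m + m := by exact_mod_cast congrArg (Nat.cast : ℕ → ℝ) hTval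
    have h2 : (h : ℝ) = 2 * m + 1 := by exact_mod_cast congrArg (Nat.cast : ℕ → ℝ) hm
    rw [h1, h2]; ring
  push_cast
  linear_combination ((h : ℝ) / 2) * hT4
end

section
/- Let n be odd, h be odd, h ≥ 2, n ≥ 1, and suppose h ≤ n. Then the Wiener index of the orbit O^1_0 = V^1_0 ∪ V^0_n of ZT(n,h) equals W(O^1_0) = (h/2)(h² + 4hn − 2h − 1). -/
/-!
Distances in `ZT(n,h)` are pinned down by two potentials that change by at most one along every
edge: the height `2i + k` of `v^k_{i,j}`, and its angle `2j + k` taken modulo `2h`. Within a row,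
going once around costs two edges per step of `j`, and the angle shows that nothing is shorter,
so two vertices of a row are at distance twice the circular distance of their `j`'s. A vertex of
`V^1_0` and one of `V^0_n` are at distance `2n - 1`: the height gives the lower bound, and since
each two-edge climb may also shift `j` by one, `h ≤ n` leaves enough layers to absorb any shift.
Summing, each row of odd length `h` contributes `h(h² - 1)/4` and the cross pairs `h²(2n - 1)`.
-/

open SimpleGraph

namespace SimpleGraph

variable {V A : Type*} [AddGroup A] {G : SimpleGraph V}

theorem le_edist_of_forall_adj (ℓ : A → ℕ) (hℓ0 : ℓ 0 = 0)
    (hℓ : ∀ a b, ℓ (a + b) ≤ ℓ a + ℓ b) (f : V → A)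
    (hf : ∀ a b, G.Adj a b → ℓ (f a - f b) ≤ 1) (u v : V) :
    (ℓ (f u - f v) : ℕ∞) ≤ G.edist u v := by
  have walk_bound : ∀ {u v} (p : G.Walk u v), ℓ (f u - f v) ≤ p.length := by
    intro u v p
    induction p with
    | nil => simp [hℓ0]
    | cons hadj p ih =>
      rw [Walk.length_cons, ← sub_add_sub_cancel _ (f _)]
      exact (hℓ _ _).trans (by linarith [hf _ _ hadj])
  exact le_iInf fun p ↦ by exact_mod_cast walk_bound p

end SimpleGraph

theorem Int.sum_Icc_neg_natAbs (m : ℕ) :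
    ∑ k ∈ Finset.Icc (-m : ℤ) m, k.natAbs = m * (m + 1) := by
  induction m with
  | zero => simp
  | succ m ih =>
    have hIcc : Finset.Icc (-(m + 1 : ℕ) : ℤ) (m + 1 : ℕ)
        = insert (-(m + 1 : ℤ)) (insert (m + 1 : ℤ) (Finset.Icc (-m : ℤ) m)) := by
      ext k
      simp only [Finset.mem_Icc, Finset.mem_insert]
      omega
    rw [hIcc, Finset.sum_insert (by simp only [Finset.mem_insert, Finset.mem_Icc]; omega),
      Finset.sum_insert (by simp), ih,
      show (-(m + 1 : ℤ)).natAbs = m + 1 by omega, show ((m : ℤ) + 1).natAbs = m + 1 by omega]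
    ring

namespace ZMod

variable {N : ℕ}

theorem natAbs_valMinAbs_intCast_le [NeZero N] (z : ℤ) :
    (z : ZMod N).valMinAbs.natAbs ≤ z.natAbs :=
  natAbs_min_of_le_div_two N _ _ (by simp) (natAbs_valMinAbs_le _)

theorem natAbs_valMinAbs_add_le_add (a b : ZMod N) :
    (a + b).valMinAbs.natAbs ≤ a.valMinAbs.natAbs + b.valMinAbs.natAbs :=
  (natAbs_valMinAbs_add_le a b).trans (Int.natAbs_add_le _ _)

def double (N : ℕ) : ZMod N →+ ZMod (2 * N) :=
  lift N ⟨(2 : ℤ) • Int.castAddHom (ZMod (2 * N)), by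
    simp only [AddMonoidHom.smul_apply, Int.coe_castAddHom, Int.cast_natCast, zsmul_eq_mul]
    exact_mod_cast natCast_self (2 * N)⟩

theorem double_intCast (z : ℤ) : double N z = ((2 * z : ℤ) : ZMod (2 * N)) := by
  simp [double, lift_coe]

theorem double_one : double N 1 = 2 := by
  simpa using double_intCast (N := N) 1

theorem valMinAbs_double [NeZero N] (x : ZMod N) :
    (double N x).valMinAbs = 2 * x.valMinAbs := by
  have hx := x.valMinAbs_mem_Ioc
  conv_lhs => rw [← x.coe_valMinAbs, double_intCast]
  rw [valMinAbs_spec]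
  refine ⟨rfl, ?_, ?_⟩ <;> push_cast <;> linarith [hx.1, hx.2]

theorem sum_natAbs_valMinAbs (m : ℕ) :
    ∑ t : ZMod (2 * m + 1), t.valMinAbs.natAbs = m * (m + 1) := by
  rw [← Int.sum_Icc_neg_natAbs]
  refine Finset.sum_nbij' valMinAbs Int.cast ?_ (by simp) (by simp) ?_ (by simp)
  · intro t _
    have ht := t.valMinAbs_mem_Ioc
    push_cast at ht
    simp only [Finset.mem_Icc]
    constructor <;> linarith [ht.1, ht.2]
  · intro k hk
    simp only [Finset.mem_Icc] at hk
    rw [valMinAbs_spec]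
    refine ⟨rfl, ?_, ?_⟩ <;> push_cast <;> linarith [hk.1, hk.2]

end ZMod

theorem setWiener_union {V : Type*} (G : SimpleGraph V) {S T : Set V} (hS : S.Finite)
    (hT : T.Finite) (hST : Disjoint S T) :
    setWiener G (S ∪ T) =
      setWiener G S + setWiener G T + ∑ᶠ u ∈ S, ∑ᶠ v ∈ T, (G.dist u v : ℝ) := by
  have hswap :
      ∑ᶠ u ∈ T, ∑ᶠ v ∈ S, (G.dist u v : ℝ) = ∑ᶠ u ∈ S, ∑ᶠ v ∈ T, (G.dist u v : ℝ) := by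
    rw [finsum_mem_comm _ hT hS]
    simp only [dist_comm]
  simp only [setWiener, finsum_mem_union hST hS hT, finsum_mem_add_distrib hS,
    finsum_mem_add_distrib hT, hswap]
  ring

namespace ZT

variable {n h : ℕ}

theorem adj_zero_one (i : Fin (n + 1)) (j : ZMod h) : (ZT n h).Adj (0, i, j) (1, i, j) :=
  (fromRel_adj _ _ _).2 ⟨by simp, .inl (.inl ⟨rfl, rfl, rfl, rfl⟩)⟩

theorem adj_one_zero_add_one (i : Fin (n + 1)) (j : ZMod h) :
    (ZT n h).Adj (1, i, j) (0, i, j + 1) :=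
  (fromRel_adj _ _ _).2 ⟨by simp, .inl (.inr (.inl ⟨rfl, rfl, rfl, rfl⟩))⟩

theorem adj_castSucc_succ (i : Fin n) (j : ZMod h) :
    (ZT n h).Adj (1, i.castSucc, j) (0, i.succ, j) :=
  (fromRel_adj _ _ _).2 ⟨by simp, .inl (.inr (.inr ⟨rfl, rfl, by simp, rfl⟩))⟩

def height (v : ZTVert n h) : ℤ := 2 * (v.2.1 : ℕ) + (v.1 : ℕ)

def angle (v : ZTVert n h) : ZMod (2 * h) := ZMod.double h v.2.2 + (v.1 : ℕ)

theorem natAbs_height_sub_le_one {a b : ZTVert n h} (hab : (ZT n h).Adj a b) :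
    (height a - height b).natAbs ≤ 1 := by
  obtain ⟨ka, ia, ja⟩ := a
  obtain ⟨kb, ib, jb⟩ := b
  rcases ((fromRel_adj _ _ _).1 hab).2 with
    (⟨rfl, rfl, rfl, -⟩ | ⟨rfl, rfl, rfl, -⟩ | ⟨rfl, rfl, hi, -⟩) |
    (⟨rfl, rfl, rfl, -⟩ | ⟨rfl, rfl, rfl, -⟩ | ⟨rfl, rfl, hi, -⟩) <;>
    simp only [height] at * <;> omega

theorem natAbs_valMinAbs_angle_sub_le_one [NeZero h] {a b : ZTVert n h}
    (hab : (ZT n h).Adj a b) : (angle a - angle b).valMinAbs.natAbs ≤ 1 := by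
  suffices ∃ z : ℤ, z.natAbs ≤ 1 ∧ angle a - angle b = z by
    obtain ⟨z, hz, hab⟩ := this
    exact hab ▸ (ZMod.natAbs_valMinAbs_intCast_le z).trans hz
  obtain ⟨ka, ia, ja⟩ := a
  obtain ⟨kb, ib, jb⟩ := b
  rcases ((fromRel_adj _ _ _).1 hab).2 with
    (⟨rfl, rfl, -, rfl⟩ | ⟨rfl, rfl, -, rfl⟩ | ⟨rfl, rfl, -, rfl⟩) |
    (⟨rfl, rfl, -, rfl⟩ | ⟨rfl, rfl, -, rfl⟩ | ⟨rfl, rfl, -, rfl⟩)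
  · exact ⟨-1, by simp, by simp [angle]⟩
  · exact ⟨-1, by simp, by simp [angle, ZMod.double_one]; norm_num⟩
  · exact ⟨1, by simp, by simp [angle]⟩
  · exact ⟨1, by simp, by simp [angle]⟩
  · exact ⟨1, by simp, by simp [angle, ZMod.double_one]; norm_num⟩
  · exact ⟨-1, by simp, by simp [angle]⟩

theorem edist_add_one_le (k : Fin 2) (i : Fin (n + 1)) (j : ZMod h) :
    (ZT n h).edist (k, i, j) (k, i, j + 1) ≤ 2 := by
  fin_cases k
  · simpa using edist_le ((Walk.nil.cons (adj_one_zero_add_one i j)).cons (adj_zero_one i j))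
  · simpa using
      edist_le ((Walk.nil.cons (adj_zero_one i (j + 1))).cons (adj_one_zero_add_one i j))

theorem edist_add_intCast_le (k : Fin 2) (i : Fin (n + 1)) (j : ZMod h) (z : ℤ) :
    (ZT n h).edist (k, i, j) (k, i, j + z) ≤ 2 * z.natAbs := by
  induction z using Int.induction_on with
  | zero => simp
  | succ m ih =>
    calc (ZT n h).edist (k, i, j) (k, i, j + (m + 1 : ℤ))
        ≤ (ZT n h).edist (k, i, j) (k, i, j + m)
          + (ZT n h).edist (k, i, j + m) (k, i, j + m + 1) := by
          push_cast
          rw [← add_assoc]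
          exact (ZT n h).edist_triangle
      _ ≤ 2 * m + 2 := add_le_add (by simpa using ih) (edist_add_one_le k i _)
      _ = 2 * ((m + 1 : ℤ).natAbs : ℕ∞) := by norm_cast
  | pred m ih =>
    have hstep : j + ((-m : ℤ) : ZMod h) = j + ((-m - 1 : ℤ) : ZMod h) + 1 := by push_cast; ring
    calc (ZT n h).edist (k, i, j) (k, i, j + (-m - 1 : ℤ))
        ≤ (ZT n h).edist (k, i, j) (k, i, j + (-m : ℤ))
          + (ZT n h).edist (k, i, j + (-m : ℤ)) (k, i, j + (-m - 1 : ℤ)) :=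
          (ZT n h).edist_triangle
      _ ≤ 2 * m + 2 := add_le_add (by simpa using ih)
          (by rw [hstep, edist_comm]; exact edist_add_one_le k i _)
      _ = 2 * ((-m - 1 : ℤ).natAbs : ℕ∞) := by
          rw [show (-m - 1 : ℤ).natAbs = m + 1 by omega]
          norm_cast

theorem edist_row [NeZero h] (k : Fin 2) (i : Fin (n + 1)) (j j' : ZMod h) :
    (ZT n h).edist (k, i, j) (k, i, j') = (2 * (j' - j).valMinAbs.natAbs : ℕ) := by
  apply le_antisymm
  · simpa using edist_add_intCast_le k i j (j' - j).valMinAbs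
  · have hangle : angle ((k, i, j') : ZTVert n h) - angle (k, i, j) = ZMod.double h (j' - j) := by
      simp [angle, map_sub]
    have := le_edist_of_forall_adj (fun x : ZMod (2 * h) ↦ x.valMinAbs.natAbs) (by simp)
      ZMod.natAbs_valMinAbs_add_le_add angle (fun _ _ ↦ natAbs_valMinAbs_angle_sub_le_one)
      ((k, i, j') : ZTVert n h) (k, i, j)
    rwa [hangle, ZMod.valMinAbs_double, Int.natAbs_mul, edist_comm] at this

theorem edist_castSucc_succ_le (i : Fin n) (x : ZMod h) :
    (ZT n h).edist (1, i.castSucc, x) (1, i.succ, x) ≤ 2 := by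
  simpa using edist_le ((Walk.nil.cons (adj_zero_one i.succ x)).cons (adj_castSucc_succ i x))

theorem edist_castSucc_add_one_succ_le (i : Fin n) (x : ZMod h) :
    (ZT n h).edist (1, i.castSucc, x + 1) (1, i.succ, x) ≤ 2 := by
  simpa using edist_le
    ((Walk.nil.cons (adj_one_zero_add_one i.succ x).symm).cons (adj_castSucc_succ i (x + 1)))

theorem edist_one_zero_le (j : ZMod h) (i : Fin (n + 1)) {s : ℕ} (hs : s ≤ i) :
    (ZT n h).edist (1, 0, j) (1, i, j - s) ≤ 2 * (i : ℕ) := by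
  induction i using Fin.induction generalizing s with
  | zero =>
    obtain rfl : s = 0 := by simpa using hs
    simp
  | succ i ih =>
    rw [Fin.val_succ] at hs ⊢
    obtain ⟨s', hs', hstep⟩ : ∃ s' ≤ (i : ℕ),
        (ZT n h).edist (1, i.castSucc, j - s') (1, i.succ, j - s) ≤ 2 := by
      rcases hs.lt_or_eq with hs | rfl
      · exact ⟨s, by omega, edist_castSucc_succ_le i _⟩
      · refine ⟨i, le_rfl, ?_⟩
        have hdiag : j - ((i : ℕ) : ZMod h) = j - ((i + 1 : ℕ) : ZMod h) + 1 := by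
          push_cast
          ring
        rw [hdiag]
        exact edist_castSucc_add_one_succ_le i _
    calc (ZT n h).edist (1, 0, j) (1, i.succ, j - s)
        ≤ (ZT n h).edist (1, 0, j) (1, i.castSucc, j - s')
          + (ZT n h).edist (1, i.castSucc, j - s') (1, i.succ, j - s) :=
          (ZT n h).edist_triangle
      _ ≤ 2 * i + 2 := add_le_add (by simpa using ih hs') hstep
      _ = 2 * ((i + 1 : ℕ) : ℕ∞) := by norm_cast

theorem edist_bottom_top [NeZero h] (hle : h ≤ n) (j j' : ZMod h) :
    (ZT n h).edist (1, 0, j) (0, Fin.last n, j') = (2 * n - 1 : ℕ) := by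
  obtain ⟨m, rfl⟩ : ∃ m, n = m + 1 := ⟨n - 1, by have := NeZero.pos h; omega⟩
  apply le_antisymm
  · have hclimb := edist_one_zero_le j (Fin.last m).castSucc (s := (j - j').val)
      (by have := (j - j').val_lt; simp; omega)
    rw [ZMod.natCast_zmod_val, sub_sub_cancel] at hclimb
    have hup := edist_eq_one_iff_adj.2 (adj_castSucc_succ (Fin.last m) j')
    rw [Fin.succ_last] at hup
    calc (ZT (m + 1) h).edist (1, 0, j) (0, Fin.last (m + 1), j')
        ≤ (ZT (m + 1) h).edist (1, 0, j) (1, (Fin.last m).castSucc, j')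
          + (ZT (m + 1) h).edist (1, (Fin.last m).castSucc, j') (0, Fin.last (m + 1), j') :=
          (ZT (m + 1) h).edist_triangle
      _ ≤ 2 * m + 1 := add_le_add (by simpa using hclimb) hup.le
      _ = (2 * (m + 1) - 1 : ℕ) := by norm_cast
  · have hheight : (height ((0, Fin.last (m + 1), j') : ZTVert (m + 1) h)
        - height ((1, 0, j) : ZTVert (m + 1) h)).natAbs = 2 * (m + 1) - 1 := by
      simp only [height, Fin.val_last, Fin.val_zero, Fin.val_one]
      omega
    have := le_edist_of_forall_adj Int.natAbs rfl Int.natAbs_add_le height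
      (fun _ _ ↦ natAbs_height_sub_le_one) ((0, Fin.last (m + 1), j') : ZTVert (m + 1) h)
      (1, 0, j)
    rwa [hheight, edist_comm] at this

theorem dist_row [NeZero h] (k : Fin 2) (i : Fin (n + 1)) (j j' : ZMod h) :
    (ZT n h).dist (k, i, j) (k, i, j') = 2 * (j' - j).valMinAbs.natAbs := by
  rw [SimpleGraph.dist, edist_row, ENat.toNat_natCast]

theorem dist_bottom_top [NeZero h] (hle : h ≤ n) (j j' : ZMod h) :
    (ZT n h).dist (1, 0, j) (0, Fin.last n, j') = 2 * n - 1 := by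
  rw [SimpleGraph.dist, edist_bottom_top hle, ENat.toNat_natCast]

theorem finsum_mem_ZTVset {M : Type*} [AddCommMonoid M] [NeZero h] (F : ZTVert n h → M)
    (k : Fin 2) (i : Fin (n + 1)) : ∑ᶠ v ∈ ZTVset n h k i, F v = ∑ j, F (k, i, j) := by
  have hrange : ZTVset n h k i = Set.range fun j : ZMod h ↦ ((k, i, j) : ZTVert n h) := by
    ext ⟨k', i', j'⟩
    simp [ZTVset, Fin.val_inj, eq_comm]
  rw [hrange, finsum_mem_range fun _ _ hj ↦ by simpa using hj, finsum_eq_sum_of_fintype]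

theorem disjoint_ZTVset {k k' : Fin 2} (hk : k ≠ k') (i i' : ℕ) :
    Disjoint (ZTVset n h k i) (ZTVset n h k' i') :=
  Set.disjoint_left.2 fun _ hv hv' ↦ hk (hv.1.symm.trans hv'.1)

theorem setWiener_ZTVset (hh : Odd h) (k : Fin 2) (i : Fin (n + 1)) :
    setWiener (ZT n h) (ZTVset n h k i) = h * ((h : ℝ) ^ 2 - 1) / 4 := by
  obtain ⟨m, rfl⟩ := hh
  have hrow : ∀ j : ZMod (2 * m + 1),
      ∑ j', ((2 * (j' - j).valMinAbs.natAbs : ℕ) : ℝ) = 2 * (m * (m + 1) : ℕ) := by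
    intro j
    refine ((Equiv.subRight j).sum_comp fun t ↦ ((2 * t.valMinAbs.natAbs : ℕ) : ℝ)).trans ?_
    rw [← ZMod.sum_natAbs_valMinAbs]
    push_cast
    rw [Finset.mul_sum]
  simp only [setWiener, finsum_mem_ZTVset, dist_row, hrow, Finset.sum_const, Finset.card_univ,
    ZMod.card, nsmul_eq_mul]
  push_cast
  ring

theorem finsum_dist_bottom_top [NeZero h] (hle : h ≤ n) :
    ∑ᶠ u ∈ ZTVset n h 1 (0 : Fin (n + 1)), ∑ᶠ v ∈ ZTVset n h 0 (Fin.last n),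
      ((ZT n h).dist u v : ℝ) = h ^ 2 * (2 * n - 1) := by
  have hn : 1 ≤ n := (NeZero.pos h).trans_le hle
  simp only [finsum_mem_ZTVset, dist_bottom_top hle, Finset.sum_const,
    Finset.card_univ, ZMod.card, nsmul_eq_mul, Nat.cast_sub (by omega : 1 ≤ 2 * n)]
  push_cast
  ring

end ZT

theorem wiener_orbit_13_general (n h : ℕ) (hhodd : Odd h) (hle : h ≤ n) :
    setWiener (ZT n h) (ZTVset n h 1 0 ∪ ZTVset n h 0 n) = ((h : ℝ) / 2) * ((h : ℝ) ^ 2 + 4 * h * n - 2 * h - 1) := by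
  have : NeZero h := ⟨hhodd.pos.ne'⟩
  have hbottom : ZTVset n h 1 0 = ZTVset n h 1 (0 : Fin (n + 1)) := by rw [Fin.val_zero]
  have htop : ZTVset n h 0 n = ZTVset n h 0 (Fin.last n) := by rw [Fin.val_last]
  rw [hbottom, htop, setWiener_union _ (Set.toFinite _) (Set.toFinite _)
    (ZT.disjoint_ZTVset (by decide) _ _), ZT.setWiener_ZTVset hhodd, ZT.setWiener_ZTVset hhodd,
    ZT.finsum_dist_bottom_top hle]
  ring

/-- For odd `n ≥ 1` and odd `h ≥ 2` with `h ≤ n`, the Wiener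
index of the orbit `O¹₀ = V¹₀ ∪ V⁰ₙ` of `ZT(n,h)` equals
`(h/2)(h² + 4hn − 2h − 1)`. -/
theorem wiener_orbit_13 (n h : ℕ) (hn : 1 ≤ n) (hh : 2 ≤ h)
    (hnodd : Odd n) (hhodd : Odd h) (hle : h ≤ n) :
    setWiener (ZT n h) (ZTVset n h 1 0 ∪ ZTVset n h 0 n) = ((h : ℝ) / 2) * ((h : ℝ) ^ 2 + 4 * h * n - 2 * h - 1) :=
  wiener_orbit_13_general n h hhodd hle
end
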